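/- arXiv:1602.01431 — 8 statements merged into one kernel-verified Lean document; each statement's English description precedes it below -/
import Mathlib

section
/- Let G be a finite abelian group equipped with a nondegenerate alternating bilinear pairing [·,·] : G × G → ℚ/ℤ. Then the order of G is a perfect square. -/
/-!
Choose `x, y` with `[x, y]` of order `n = exp G`. Every value `[u, g]` is killed by `n`, and the
`n`-torsion of `ℚ/ℤ` is the cyclic group generated by `[x, y]`; so `g ↦ ([x, g], [y, g])` maps `G`
onto `⟨[x, y]⟩²` with kernel `K = {x, y}ᗮ`, whence `|G| = n² |K|`. Moreover `G = ⟨x, y⟩ + K`, so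
the pairing stays nondegenerate on `K`, and induction on `|G|` finishes.
-/

open AddSubgroup

theorem mem_zmultiples_of_addOrderOf_nsmul_eq_zero {A : Type*} [AddGroup A] {t z : A}
    (htors : {a : A | addOrderOf t • a = 0}.encard ≤ addOrderOf t) (ht : IsOfFinAddOrder t)
    (hz : addOrderOf t • z = 0) : z ∈ zmultiples t := by
  have hsub : (zmultiples t : Set A) ⊆ {a | addOrderOf t • a = 0} := by
    rintro _ ⟨k, rfl⟩
    rw [Set.mem_ofPred_eq, ← natCast_zsmul, smul_smul, mul_comm, mul_smul, natCast_zsmul,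
      addOrderOf_nsmul_eq_zero, smul_zero]
  have hfin : (zmultiples t : Set A).Finite := ht.finite_zmultiples
  have hcard : (zmultiples t : Set A).encard = addOrderOf t := by
    rw [← hfin.cast_ncard_eq, ← Nat.card_coe_set_eq, SetLike.coe_sort_coe, Nat.card_zmultiples]
  rw [← SetLike.mem_coe, hfin.eq_of_subset_of_encard_le hsub (hcard ▸ htors)]
  exact hz

namespace AddMonoidHom

section Pairing

variable {A G : Type*} [AddCommGroup A] [AddCommGroup G] (B : G →+ G →+ A)

theorem apply_swap_eq_neg (halt : ∀ x, B x x = 0) (x y : G) : B y x = -B x y := by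
  have h := halt (x + y)
  simp only [map_add, add_apply, halt, zero_add, add_zero] at h
  exact eq_neg_of_add_eq_zero_left h

theorem exists_addOrderOf_apply_eq_exponent [Finite G] (hsep : ∀ x, (∀ y, B x y = 0) → x = 0) :
    ∃ x y, addOrderOf (B x y) = AddMonoid.exponent G := by
  obtain ⟨x, hx⟩ := AddMonoid.exists_addOrderOf_eq_exponent (.of_finite (G := G))
  have hexp : AddMonoid.exponent (B x).range = AddMonoid.exponent G := by
    refine dvd_antisymm (AddMonoid.exponent_dvd_of_forall_nsmul_eq_zero ?_)
      (hx ▸ addOrderOf_dvd_of_nsmul_eq_zero (hsep _ fun y => ?_))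
    · rintro ⟨_, g, rfl⟩
      ext
      simp [← map_nsmul, AddMonoid.exponent_nsmul_eq_zero]
    · rw [map_nsmul, nsmul_apply]
      exact congrArg Subtype.val (AddMonoid.exponent_nsmul_eq_zero ((B x).rangeRestrict y))
  have : Finite (B x).range := .of_surjective _ (B x).rangeRestrict_surjective
  obtain ⟨z, hz⟩ := AddMonoid.exists_addOrderOf_eq_exponent (.of_finite (G := (B x).range))
  obtain ⟨y, hy⟩ := mem_range.1 z.2
  exact ⟨x, y, by rw [hy, addOrderOf_coe, hz, hexp]⟩

theorem exists_prod_apply_zsmul_add_zsmul_eq (halt : ∀ x, B x x = 0) {x y : G} {p : A × A}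
    (hp : p ∈ (zmultiples (B x y)).prod (zmultiples (B x y))) :
    ∃ a c : ℤ, (B x).prod (B y) (a • x + c • y) = p := by
  obtain ⟨⟨c, hc⟩, ⟨a, ha⟩⟩ := hp
  refine ⟨-a, c, Prod.ext ?_ ?_⟩ <;> simp [halt, apply_swap_eq_neg B halt x, ← hc, ← ha]

end Pairing

section Splitting

variable {A G : Type*} [AddCommGroup A] [AddCommGroup G] [Finite G] {B : G →+ G →+ A}
  {x y : G} (halt : ∀ x, B x x = 0) (hxy : addOrderOf (B x y) = AddMonoid.exponent G)
  (htors : {a : A | AddMonoid.exponent G • a = 0}.encard ≤ AddMonoid.exponent G)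
include hxy htors

theorem apply_mem_zmultiples (u g : G) : B u g ∈ zmultiples (B x y) := by
  refine mem_zmultiples_of_addOrderOf_nsmul_eq_zero (hxy ▸ htors) ?_ ?_
  · rw [← addOrderOf_pos_iff, hxy]
    exact AddMonoid.exponent_pos.2 .of_finite
  · rw [hxy, ← map_nsmul, AddMonoid.exponent_nsmul_eq_zero, map_zero]

include halt

theorem range_prod_eq_prod_zmultiples :
    ((B x).prod (B y)).range = (zmultiples (B x y)).prod (zmultiples (B x y)) := by
  ext p
  constructor
  · rintro ⟨g, rfl⟩
    exact ⟨apply_mem_zmultiples hxy htors x g, apply_mem_zmultiples hxy htors y g⟩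
  · intro hp
    obtain ⟨a, c, h⟩ := exists_prod_apply_zsmul_add_zsmul_eq B halt hp
    exact ⟨_, h⟩

theorem card_eq_exponent_mul_exponent_mul_card_ker_prod :
    Nat.card G =
      AddMonoid.exponent G * AddMonoid.exponent G * Nat.card ((B x).prod (B y)).ker := by
  rw [← ((B x).prod (B y)).ker.card_mul_index, index_ker,
    range_prod_eq_prod_zmultiples halt hxy htors, Nat.card_congr (prodEquiv _ _).toEquiv,
    Nat.card_prod, Nat.card_zmultiples, hxy, mul_comm]

theorem exists_sub_zsmul_add_zsmul_mem_ker_prod (g : G) :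
    ∃ a c : ℤ, g - (a • x + c • y) ∈ ((B x).prod (B y)).ker := by
  obtain ⟨a, c, h⟩ := exists_prod_apply_zsmul_add_zsmul_eq B halt (p := (B x).prod (B y) g)
    ⟨apply_mem_zmultiples hxy htors x g, apply_mem_zmultiples hxy htors y g⟩
  exact ⟨a, c, by rw [mem_ker, map_sub, h, prod_apply, sub_self]⟩

theorem eq_zero_of_forall_mem_ker_prod (hsep : ∀ x, (∀ y, B x y = 0) → x = 0) {k : G}
    (hk : k ∈ ((B x).prod (B y)).ker) (h : ∀ k' ∈ ((B x).prod (B y)).ker, B k k' = 0) :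
    k = 0 := by
  obtain ⟨hxk, hyk⟩ := Prod.mk_eq_zero.1 (mem_ker.1 hk)
  refine hsep k fun g => ?_
  obtain ⟨a, c, hg⟩ := exists_sub_zsmul_add_zsmul_mem_ker_prod halt hxy htors g
  rw [← sub_add_cancel g (a • x + c • y), map_add, h _ hg, map_add, map_zsmul, map_zsmul,
    apply_swap_eq_neg B halt x, apply_swap_eq_neg B halt y, hxk, hyk]
  simp

end Splitting

theorem isSquare_card_of_alternating_of_separating {A : Type*} [AddCommGroup A]
    (htors : ∀ n : ℕ, n ≠ 0 → {a : A | n • a = 0}.encard ≤ n) {G : Type*} [AddCommGroup G]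
    [Finite G] (B : G →+ G →+ A) (halt : ∀ x, B x x = 0)
    (hsep : ∀ x, (∀ y, B x y = 0) → x = 0) : IsSquare (Nat.card G) := by
  induction hN : Nat.card G using Nat.strong_induction_on generalizing G with
  | _ N ih =>
  subst hN
  rcases subsingleton_or_nontrivial G with hG | hG
  · exact ⟨1, by rw [Nat.card_unique]⟩
  obtain ⟨x, y, hxy⟩ := exists_addOrderOf_apply_eq_exponent B hsep
  have hn : 1 < AddMonoid.exponent G := AddMonoid.one_lt_exponent
  have htorsG := htors (AddMonoid.exponent G) (by omega)
  have hcard := card_eq_exponent_mul_exponent_mul_card_ker_prod halt hxy htorsG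
  set K := ((B x).prod (B y)).ker
  have hlt : Nat.card K < Nat.card G :=
    hcard ▸ (lt_mul_iff_one_lt_left Nat.card_pos).2 (one_lt_mul'' hn hn)
  obtain ⟨m, hm⟩ := ih _ hlt ((B.comp K.subtype).compl₂ K.subtype) (fun k => halt k)
    (fun k hk => Subtype.ext (eq_zero_of_forall_mem_ker_prod halt hxy htorsG hsep k.2
      fun k' hk' => hk ⟨k', hk'⟩)) rfl
  exact ⟨AddMonoid.exponent G * m, by rw [hcard, hm]; ring⟩

end AddMonoidHom

/-- a finite abelian group admitting a nondegenerate alternating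
pairing with values in `ℚ/ℤ` has square order. -/
theorem card_sq_of_nondeg_alternating_pairing (G : Type) [AddCommGroup G] [Fintype G]
    (f : G → G → AddCircle (1 : ℚ))
    (hadd_left : ∀ x y z, f (x + y) z = f x z + f y z)
    (hadd_right : ∀ x y z, f x (y + z) = f x y + f x z)
    (halt : ∀ x, f x x = 0)
    (hnondeg : ∀ x, (∀ y, f x y = 0) → x = 0) :
    IsSquare (Fintype.card G) := by
  let B : G →+ G →+ AddCircle (1 : ℚ) :=
    AddMonoidHom.mk' (fun x => AddMonoidHom.mk' (f x) (hadd_right x))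
      fun x y => AddMonoidHom.ext (hadd_left x y)
  have htors (n : ℕ) (hn : n ≠ 0) : {a : AddCircle (1 : ℚ) | n • a = 0}.encard ≤ n :=
    AddCircle.card_torsion_le_of_isSMulRegular 1 n hn (.of_ne_zero hn)
  rw [← Nat.card_eq_fintype_card]
  exact B.isSquare_card_of_alternating_of_separating htors halt hnondeg
end

section
/- Every symplectic finite abelian group is isomorphic (as a symplectic group) to J × J^∨ for some finite abelian group J, where J^∨ = Hom(J, ℚ/ℤ), equipped with the natural pairing [(a,φ),(b,ψ)] = ψ(a) - φ(b). In particular, as an abstract group it is isomorphic to J × J. -/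
/-!
Induct on `|G|`. Let `n` be the exponent of `G` and `x` an element of order `n`. By
nondegeneracy the character `[x, ·]` also has order `n`, and a character of order `n` of a finite
group into `ℚ/ℤ` takes the value `1/n`; so `[x, y] = 1/n` for some `y`. Then `x` and `y` span a
hyperbolic plane `ℤ/n × ℤ/n`, and `G` is its orthogonal sum with `K = {x, y}^⊥`, a smaller
symplectic group. Orthogonal sums of forms `J × J^∨` are again of this form and `ℤ/n ≅ (ℤ/n)^∨`;
carrying such a self-duality `J ≅ J^∨` through the induction also gives `G ≅ J × J`.
-/

noncomputable section

namespace SymplecticFiniteAbelian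

local notation "𝕋" => AddCircle (1 : ℚ)

section Cyclic

variable (n : ℕ) [NeZero n]

def zmodToCircle : ZMod n →+ 𝕋 :=
  ZMod.lift n ⟨zmultiplesHom 𝕋 ((n : ℚ)⁻¹ : ℚ), by
    rw [zmultiplesHom_apply, natCast_zsmul, ← AddCircle.coe_nsmul, nsmul_eq_mul,
      mul_inv_cancel₀ (NeZero.ne (n : ℚ)), AddCircle.coe_period]⟩

variable {n}

theorem zmodToCircle_intCast (m : ℤ) : zmodToCircle n m = ((m / n : ℚ) : 𝕋) := by
  rw [zmodToCircle, ZMod.lift_coe, zmultiplesHom_apply, ← AddCircle.coe_zsmul, zsmul_eq_mul,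
    div_eq_mul_inv]

theorem zmodToCircle_one : zmodToCircle n 1 = (((n : ℚ)⁻¹ : ℚ) : 𝕋) := by
  simpa using zmodToCircle_intCast (n := n) 1

theorem zmodToCircle_injective : Function.Injective (zmodToCircle n) := by
  rw [injective_iff_map_eq_zero]
  intro a ha
  obtain ⟨m, rfl⟩ := ZMod.intCast_surjective a
  obtain ⟨k, hk⟩ := (AddCircle.coe_eq_zero_iff 1).mp ((zmodToCircle_intCast m).symm.trans ha)
  rw [ZMod.intCast_zmod_eq_zero_iff_dvd]
  refine ⟨k, ?_⟩
  rw [zsmul_one, eq_div_iff (NeZero.ne (n : ℚ))] at hk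
  exact_mod_cast hk.symm.trans (mul_comm _ _)

theorem exists_zmodToCircle_eq {z : 𝕋} (hz : n • z = 0) : ∃ a, zmodToCircle n a = z := by
  obtain ⟨q, rfl⟩ := QuotientAddGroup.mk_surjective z
  obtain ⟨k, hk⟩ := (AddCircle.coe_eq_zero_iff 1).mp ((AddCircle.coe_nsmul 1).trans hz)
  rw [zsmul_one, nsmul_eq_mul] at hk
  refine ⟨k, ?_⟩
  rw [zmodToCircle_intCast, hk, mul_div_cancel_left₀ _ (NeZero.ne (n : ℚ))]

variable (n) in
def zmodDualEquiv : ZMod n ≃+ (ZMod n →+ 𝕋) :=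
  AddEquiv.ofBijective (AddMonoidHom.mul.compr₂ (zmodToCircle n)) <| by
    refine ⟨(injective_iff_map_eq_zero _).mpr fun b hb => ?_, fun χ => ?_⟩
    · have h1 : zmodToCircle n b = 0 := by simpa using DFunLike.congr_fun hb 1
      exact zmodToCircle_injective (h1.trans (map_zero _).symm)
    · have hχ : n • χ 1 = 0 := by
        rw [← map_nsmul, nsmul_one, ZMod.natCast_self, map_zero]
      obtain ⟨b, hb⟩ := exists_zmodToCircle_eq hχ
      refine ⟨b, AddMonoidHom.ext fun a => ?_⟩
      obtain ⟨m, rfl⟩ := ZMod.intCast_surjective a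
      rw [AddMonoidHom.compr₂_apply, AddMonoidHom.mul_apply, ← zsmul_one m, mul_smul_comm,
        mul_one, map_zsmul, map_zsmul, hb]

theorem zmodDualEquiv_apply (b a : ZMod n) : zmodDualEquiv n b a = zmodToCircle n (b * a) := rfl

theorem exists_zmod_lift {G : Type*} [AddCommGroup G] (χ : G →+ 𝕋) (hχ : n • χ = 0) :
    ∃ Φ : G →+ ZMod n, (zmodToCircle n).comp Φ = χ := by
  have hmem (g : G) : χ g ∈ (zmodToCircle n).range :=
    exists_zmodToCircle_eq (by rw [← AddMonoidHom.nsmul_apply, hχ, AddMonoidHom.zero_apply])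
  refine ⟨(AddMonoidHom.ofInjective zmodToCircle_injective).symm.toAddMonoidHom.comp
    (χ.codRestrict _ hmem), AddMonoidHom.ext fun g => ?_⟩
  exact congrArg Subtype.val
    ((AddMonoidHom.ofInjective zmodToCircle_injective).apply_symm_apply ⟨χ g, hmem g⟩)

end Cyclic

theorem exists_apply_eq_inv_addOrderOf {G : Type*} [AddCommGroup G] [Finite G] (χ : G →+ 𝕋) :
    ∃ y, χ y = (((addOrderOf χ : ℚ)⁻¹ : ℚ) : 𝕋) := by
  have hexp : AddMonoid.exponent G • χ = 0 := by
    ext g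
    rw [AddMonoidHom.nsmul_apply, ← map_nsmul, AddMonoid.exponent_nsmul_eq_zero, map_zero,
      AddMonoidHom.zero_apply]
  have : NeZero (addOrderOf χ) := ⟨(addOrderOf_pos_iff.mpr (isOfFinAddOrder_iff_nsmul_eq_zero.mpr
    ⟨_, Nat.pos_of_ne_zero AddMonoid.exponent_ne_zero_of_finite, hexp⟩)).ne'⟩
  obtain ⟨Φ, hΦ⟩ := exists_zmod_lift χ (addOrderOf_nsmul_eq_zero χ)
  have hΦ (g : G) : zmodToCircle _ (Φ g) = χ g := DFunLike.congr_fun hΦ g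
  have hdvd : addOrderOf χ ∣ Nat.card Φ.range := by
    refine addOrderOf_dvd_of_nsmul_eq_zero (AddMonoidHom.ext fun g => ?_)
    have h : Nat.card Φ.range • Φ g = 0 :=
      congrArg Subtype.val (card_nsmul_eq_zero' (x := (⟨Φ g, g, rfl⟩ : Φ.range)))
    rw [AddMonoidHom.nsmul_apply, ← hΦ, ← map_nsmul, h, map_zero, AddMonoidHom.zero_apply]
  have htop : Φ.range = ⊤ := by
    refine AddSubgroup.eq_top_of_card_eq _ (le_antisymm (Finite.card_subtype_le _) ?_)
    rw [Nat.card_zmod]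
    exact Nat.le_of_dvd Nat.card_pos hdvd
  obtain ⟨y, hy⟩ : (1 : ZMod (addOrderOf χ)) ∈ Φ.range := htop ▸ AddSubgroup.mem_top _
  exact ⟨y, by rw [← hΦ, hy, zmodToCircle_one]⟩

def standardForm (J : Type) [AddCommGroup J] (p q : J × (J →+ 𝕋)) : 𝕋 := q.2 p.1 - p.2 q.1

def IsHyperbolic {G : Type} [AddCommGroup G] (f : G → G → 𝕋) : Prop :=
  ∃ (J : Type) (_ : AddCommGroup J) (_ : Fintype J) (e : G ≃+ J × (J →+ 𝕋)),
    (∀ x y, f x y = standardForm J (e x) (e y)) ∧ Nonempty (J ≃+ (J →+ 𝕋))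

@[simps]
def coprodEquiv (A B C : Type*) [AddCommGroup A] [AddCommGroup B] [AddCommGroup C] :
    ((A →+ C) × (B →+ C)) ≃+ (A × B →+ C) where
  toFun p := p.1.coprod p.2
  invFun q := (q.comp (AddMonoidHom.inl A B), q.comp (AddMonoidHom.inr A B))
  left_inv p := by ext <;> simp
  right_inv q := by ext; simp
  map_add' p q := by ext; simp [add_add_add_comm]

namespace IsHyperbolic

variable {G H : Type} [AddCommGroup G] [AddCommGroup H]

theorem of_subsingleton [Subsingleton G] {f : G → G → 𝕋} (hf : f 0 0 = 0) : IsHyperbolic f := by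
  let := uniqueOfSubsingleton (0 : G)
  let := uniqueOfSubsingleton (0 : PUnit × (PUnit →+ 𝕋))
  let := uniqueOfSubsingleton (0 : PUnit →+ 𝕋)
  refine ⟨PUnit, inferInstance, inferInstance, AddEquiv.ofUnique, fun x y => ?_,
    ⟨AddEquiv.ofUnique⟩⟩
  rw [Subsingleton.elim x 0, Subsingleton.elim y 0, hf, map_zero, standardForm]
  simp

theorem congr (e : G ≃+ H) {f : G → G → 𝕋} {g : H → H → 𝕋} (he : ∀ x y, g (e x) (e y) = f x y)
    (hf : IsHyperbolic f) : IsHyperbolic g := by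
  obtain ⟨J, _, _, eJ, hJ, hdual⟩ := hf
  refine ⟨J, inferInstance, inferInstance, e.symm.trans eJ, fun x y => ?_, hdual⟩
  rw [AddEquiv.trans_apply, AddEquiv.trans_apply, ← hJ, ← he, AddEquiv.apply_symm_apply,
    AddEquiv.apply_symm_apply]

theorem prod {f : G → G → 𝕋} {g : H → H → 𝕋} (hf : IsHyperbolic f) (hg : IsHyperbolic g) :
    IsHyperbolic fun p q : G × H => f p.1 q.1 + g p.2 q.2 := by
  obtain ⟨J, _, _, eJ, hJ, ⟨dJ⟩⟩ := hf
  obtain ⟨L, _, _, eL, hL, ⟨dL⟩⟩ := hg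
  refine ⟨J × L, inferInstance, inferInstance,
    (eJ.prodCongr eL).trans ((AddEquiv.prodProdProdComm _ _ _ _).trans
      ((AddEquiv.refl _).prodCongr (coprodEquiv J L 𝕋))), fun p q => ?_,
    ⟨(dJ.prodCongr dL).trans (coprodEquiv J L 𝕋)⟩⟩
  change f p.1 q.1 + g p.2 q.2 =
    coprodEquiv J L 𝕋 ((eJ q.1).2, (eL q.2).2) ((eJ p.1).1, (eL p.2).1) -
      coprodEquiv J L 𝕋 ((eJ p.1).2, (eL p.2).2) ((eJ q.1).1, (eL q.2).1)
  simp only [hJ, hL, standardForm, coprodEquiv_apply, AddMonoidHom.coprod_apply]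
  abel

end IsHyperbolic

theorem isHyperbolic_zmod (n : ℕ) [NeZero n] :
    IsHyperbolic fun p q : ZMod n × ZMod n => zmodToCircle n (p.1 * q.2 - p.2 * q.1) := by
  refine ⟨ZMod n, inferInstance, inferInstance,
    (AddEquiv.refl _).prodCongr (zmodDualEquiv n), fun p q => ?_, ⟨zmodDualEquiv n⟩⟩
  change zmodToCircle n _ = zmodDualEquiv n q.2 p.1 - zmodDualEquiv n p.2 q.1
  rw [zmodDualEquiv_apply, zmodDualEquiv_apply, ← map_sub, mul_comm q.2, mul_comm p.2]

section Splitting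

variable {G : Type*} [AddCommGroup G] {n : ℕ}

def zmodMultiples (x : G) (hx : n • x = 0) : ZMod n →+ G :=
  ZMod.lift n ⟨zmultiplesHom G x, by rwa [zmultiplesHom_apply, natCast_zsmul]⟩

theorem map_zmodMultiples [NeZero n] {x : G} (hx : n • x = 0) (χ : G →+ 𝕋) {c : ZMod n}
    (hc : χ x = zmodToCircle n c) (a : ZMod n) :
    χ (zmodMultiples x hx a) = zmodToCircle n (a * c) := by
  obtain ⟨m, rfl⟩ := ZMod.intCast_surjective a
  rw [zmodMultiples, ZMod.lift_coe, zmultiplesHom_apply, map_zsmul, hc, ← map_zsmul,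
    zsmul_eq_mul]

variable (B : G →+ G →+ 𝕋)

theorem apply_swap_of_alternating (halt : ∀ z, B z z = 0) (a b : G) : B b a = -B a b := by
  have h := halt (a + b)
  simp only [map_add, AddMonoidHom.add_apply, halt, zero_add, add_zero] at h
  exact eq_neg_of_add_eq_zero_left h

def orthogonalPair (x y : G) : AddSubgroup G := (B x).ker ⊓ (B y).ker

def restrictForm (K : AddSubgroup G) : K →+ K →+ 𝕋 := (B.compl₂ K.subtype).comp K.subtype

variable {x y : G} (hx : n • x = 0) (hy : n • y = 0)

def splitMap : (ZMod n × ZMod n) × orthogonalPair B x y →+ G :=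
  ((zmodMultiples x hx).coprod (zmodMultiples y hy)).coprod (orthogonalPair B x y).subtype

theorem splitMap_apply (p : (ZMod n × ZMod n) × orthogonalPair B x y) :
    splitMap B hx hy p = zmodMultiples x hx p.1.1 + zmodMultiples y hy p.1.2 + p.2 := rfl

variable {B} [NeZero n]

theorem apply_fst_splitMap (halt : ∀ z, B z z = 0) (hxy : B x y = zmodToCircle n 1)
    (p : (ZMod n × ZMod n) × orthogonalPair B x y) :
    B x (splitMap B hx hy p) = zmodToCircle n p.1.2 := by
  have hxx : B x x = zmodToCircle n 0 := by rw [halt, map_zero]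
  rw [splitMap_apply, map_add, map_add, map_zmodMultiples hx _ hxx, map_zmodMultiples hy _ hxy,
    (AddSubgroup.mem_inf.mp p.2.2).1, mul_zero, mul_one, map_zero, zero_add, add_zero]

theorem apply_snd_splitMap (halt : ∀ z, B z z = 0) (hxy : B x y = zmodToCircle n 1)
    (p : (ZMod n × ZMod n) × orthogonalPair B x y) :
    B y (splitMap B hx hy p) = zmodToCircle n (-p.1.1) := by
  have hyx : B y x = zmodToCircle n (-1) := by
    rw [apply_swap_of_alternating B halt, hxy, map_neg]
  have hyy : B y y = zmodToCircle n 0 := by rw [halt, map_zero]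
  rw [splitMap_apply, map_add, map_add, map_zmodMultiples hx _ hyx, map_zmodMultiples hy _ hyy,
    (AddSubgroup.mem_inf.mp p.2.2).2, mul_zero, mul_neg_one, map_zero, add_zero, add_zero]

theorem apply_orthogonalPair_splitMap (halt : ∀ z, B z z = 0) (k : orthogonalPair B x y)
    (p : (ZMod n × ZMod n) × orthogonalPair B x y) :
    B k (splitMap B hx hy p) = B k p.2 := by
  obtain ⟨hkx, hky⟩ := AddSubgroup.mem_inf.mp k.2
  have hkx' : B k x = zmodToCircle n 0 := by
    rw [apply_swap_of_alternating B halt, AddMonoidHom.mem_ker.mp hkx, neg_zero, map_zero]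
  have hky' : B k y = zmodToCircle n 0 := by
    rw [apply_swap_of_alternating B halt, AddMonoidHom.mem_ker.mp hky, neg_zero, map_zero]
  rw [splitMap_apply, map_add, map_add, map_zmodMultiples hx _ hkx', map_zmodMultiples hy _ hky',
    mul_zero, mul_zero, map_zero, zero_add, zero_add]

theorem splitMap_bijective (halt : ∀ z, B z z = 0) (hxy : B x y = zmodToCircle n 1) :
    Function.Bijective (splitMap B hx hy) := by
  constructor
  · refine (injective_iff_map_eq_zero _).mpr fun p hp => ?_
    have hb : p.1.2 = 0 := zmodToCircle_injective <| by
      rw [← apply_fst_splitMap hx hy halt hxy, hp, map_zero, map_zero]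
    have ha : p.1.1 = 0 := neg_eq_zero.mp <| zmodToCircle_injective <| by
      rw [← apply_snd_splitMap hx hy halt hxy, hp, map_zero, map_zero]
    have hk : p.2 = 0 := Subtype.ext <| by
      rwa [splitMap_apply, ha, hb, map_zero, map_zero, zero_add, zero_add] at hp
    exact Prod.ext (Prod.ext ha hb) hk
  · intro g
    have htors {z : G} (hz : n • z = 0) : n • B z g = 0 := by
      rw [← AddMonoidHom.nsmul_apply, ← map_nsmul, hz, map_zero, AddMonoidHom.zero_apply]
    obtain ⟨b, hb⟩ := exists_zmodToCircle_eq (htors hx)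
    obtain ⟨a, ha⟩ := exists_zmodToCircle_eq (htors hy)
    set g₀ := splitMap B hx hy (((-a, b), 0) : (ZMod n × ZMod n) × orthogonalPair B x y)
    have hk : g - g₀ ∈ orthogonalPair B x y := by
      refine AddSubgroup.mem_inf.mpr ⟨AddMonoidHom.mem_ker.mpr ?_, AddMonoidHom.mem_ker.mpr ?_⟩
      · rw [map_sub, apply_fst_splitMap hx hy halt hxy, hb, sub_self]
      · rw [map_sub, apply_snd_splitMap hx hy halt hxy, neg_neg, ha, sub_self]
    refine ⟨((-a, b), ⟨g - g₀, hk⟩), ?_⟩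
    simp only [g₀, splitMap_apply, ZeroMemClass.coe_zero]
    abel

theorem apply_splitMap_splitMap (halt : ∀ z, B z z = 0) (hxy : B x y = zmodToCircle n 1)
    (p q : (ZMod n × ZMod n) × orthogonalPair B x y) :
    B (splitMap B hx hy p) (splitMap B hx hy q) =
      zmodToCircle n (p.1.1 * q.1.2 - p.1.2 * q.1.1) + B p.2 q.2 := by
  have h₁ : B.flip (splitMap B hx hy q) x = zmodToCircle n q.1.2 :=
    apply_fst_splitMap hx hy halt hxy q
  have h₂ : B.flip (splitMap B hx hy q) y = zmodToCircle n (-q.1.1) :=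
    apply_snd_splitMap hx hy halt hxy q
  calc B (splitMap B hx hy p) (splitMap B hx hy q)
      = B.flip (splitMap B hx hy q) (splitMap B hx hy p) := rfl
    _ = zmodToCircle n (p.1.1 * q.1.2) + zmodToCircle n (p.1.2 * -q.1.1) + B p.2 q.2 := by
      rw [splitMap_apply B hx hy p, map_add, map_add, map_zmodMultiples hx _ h₁,
        map_zmodMultiples hy _ h₂, B.flip_apply, apply_orthogonalPair_splitMap hx hy halt]
    _ = _ := by rw [← map_add, mul_neg, ← sub_eq_add_neg]

theorem injective_restrictForm_orthogonalPair (hx : n • x = 0) (hy : n • y = 0)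
    (halt : ∀ z, B z z = 0) (hxy : B x y = zmodToCircle n 1) (hB : Function.Injective B) :
    Function.Injective (restrictForm B (orthogonalPair B x y)) := by
  refine (injective_iff_map_eq_zero _).mpr fun k hk => Subtype.ext <|
    (injective_iff_map_eq_zero B).mp hB _ <| AddMonoidHom.ext fun g => ?_
  obtain ⟨p, rfl⟩ := (splitMap_bijective hx hy halt hxy).2 g
  rw [apply_orthogonalPair_splitMap hx hy halt]
  exact DFunLike.congr_fun hk p.2

theorem notMem_orthogonalPair (halt : ∀ z, B z z = 0) (hxy : B x y = zmodToCircle n 1)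
    (hn : n ≠ 1) : x ∉ orthogonalPair B x y := fun h => by
  have hyx : B y x = 0 := (AddSubgroup.mem_inf.mp h).2
  rw [apply_swap_of_alternating B halt, hxy, neg_eq_zero, ← map_zero (zmodToCircle n)] at hyx
  exact hn (ZMod.one_eq_zero_iff.mp (zmodToCircle_injective hyx))

end Splitting

theorem isHyperbolic_of_injective {G : Type} [AddCommGroup G] [Finite G] (B : G →+ G →+ 𝕋)
    (halt : ∀ z, B z z = 0) (hB : Function.Injective B) : IsHyperbolic fun x y => B x y := by
  induction hN : Nat.card G using Nat.strong_induction_on generalizing G with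
  | _ N ih =>
  rcases subsingleton_or_nontrivial G with hG | hG
  · exact .of_subsingleton (by rw [map_zero])
  set n := AddMonoid.exponent G
  have : NeZero n := ⟨AddMonoid.exponent_ne_zero_of_finite⟩
  have hn : n ≠ 1 := fun h => not_subsingleton G (AddMonoid.exp_eq_one_iff.mp h)
  have hkill (z : G) : n • z = 0 := AddMonoid.exponent_nsmul_eq_zero z
  obtain ⟨x, hx⟩ :=
    AddMonoid.exists_addOrderOf_eq_exponent (AddMonoid.ExponentExists.of_finite (G := G))
  obtain ⟨y, hxy⟩ := exists_apply_eq_inv_addOrderOf (B x)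
  rw [addOrderOf_injective B hB, hx, ← zmodToCircle_one] at hxy
  have hK : IsHyperbolic fun k l : orthogonalPair B x y => B k l :=
    ih _ ((Finite.card_subtype_lt (notMem_orthogonalPair halt hxy hn)).trans_eq hN)
      (restrictForm B _) (fun k => halt k)
      (injective_restrictForm_orthogonalPair (hkill x) (hkill y) halt hxy hB) rfl
  exact ((isHyperbolic_zmod n).prod hK).congr
    (AddEquiv.ofBijective _ (splitMap_bijective (hkill x) (hkill y) halt hxy))
    (apply_splitMap_splitMap _ _ halt hxy)

end SymplecticFiniteAbelian

open SymplecticFiniteAbelian in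
/-- every symplectic finite abelian group `(G, f)` is isomorphic,
as a symplectic group, to `J × J^∨` with the pairing `[(a,φ),(b,ψ)] = ψ(a) - φ(b)`;
in particular `G ≅ J × J` as abstract groups. -/
theorem symplectic_iso_J_times_dual (G : Type) [AddCommGroup G] [Fintype G]
    (f : G → G → AddCircle (1 : ℚ))
    (hadd_left : ∀ x y z, f (x + y) z = f x z + f y z)
    (hadd_right : ∀ x y z, f x (y + z) = f x y + f x z)
    (halt : ∀ x, f x x = 0)
    (hnondeg : ∀ x, (∀ y, f x y = 0) → x = 0) :
    ∃ (J : Type) (_ : AddCommGroup J) (_ : Fintype J)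
      (e : G ≃+ (J × (J →+ AddCircle (1 : ℚ)))),
      (∀ x y, f x y = (e y).2 (e x).1 - (e x).2 (e y).1) ∧
      Nonempty (G ≃+ (J × J)) := by
  let B : G →+ G →+ AddCircle (1 : ℚ) :=
    AddMonoidHom.mk' (fun x => AddMonoidHom.mk' (f x) (hadd_right x))
      fun x y => AddMonoidHom.ext (hadd_left x y)
  have hB : Function.Injective B :=
    (injective_iff_map_eq_zero B).mpr fun x hx => hnondeg x (DFunLike.congr_fun hx)
  obtain ⟨J, _, _, e, he, ⟨d⟩⟩ := isHyperbolic_of_injective B halt hB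
  exact ⟨J, inferInstance, inferInstance, e, he, ⟨e.trans ((AddEquiv.refl J).prodCongr d.symm)⟩⟩
end
end

section
/- Fix r ≥ 1 and C > 0. Let u₁, …, u_r ∈ ℝⁿ be linearly independent vectors spanning a lattice Λ with determinant d(Λ) (the r-dimensional volume of the parallelepiped they span), and suppose d(Λ) ≥ C|u₁|⋯|u_r|. Then there is a constant c = c(r, C) > 0 such that for all real a₁, …, a_r, |∑_{j=1}^r a_j u_j|² ≥ c · ∑_{j=1}^r a_j² |u_j|². -/
/-!
Gram–Schmidt writes the Gram matrix as `L D Lᵀ` with `L` unit lower triangular and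
`D = diag ‖gᵢ‖²`, so `d(Λ) = ∏ ‖gᵢ‖`, where `gᵢ` is the component of `uᵢ` orthogonal to the
earlier vectors. Since `‖gᵢ‖ ≤ ‖uᵢ‖` for every `i`, the hypothesis `d(Λ) ≥ C ∏ ‖uᵢ‖` forces
`‖gᵢ‖ ≥ C ‖uᵢ‖` for each single `i`. Pairing `∑ aᵢ uᵢ` with the last vector `g_r` gives
`‖∑ aᵢ uᵢ‖ ≥ |a_r| ‖g_r‖ ≥ C |a_r| ‖u_r‖`; reordering, this holds for every index, and summing
the squares over the `r` indices gives the theorem with `c = C² / r`.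
-/

open Finset Matrix InnerProductSpace
open scoped RealInnerProductSpace

theorem mul_le_of_mul_prod_le_prod_of_le {ι : Type*} {s : Finset ι} {x y : ι → ℝ} {C : ℝ}
    (hx : ∀ i ∈ s, 0 < x i) (hy : ∀ i ∈ s, 0 ≤ y i) (hyx : ∀ i ∈ s, y i ≤ x i)
    (h : C * ∏ i ∈ s, x i ≤ ∏ i ∈ s, y i) {j : ι} (hj : j ∈ s) : C * x j ≤ y j := by
  classical
  rw [← mul_prod_erase s x hj, ← mul_prod_erase s y hj] at h
  have hpos : 0 < ∏ i ∈ s.erase j, x i := prod_pos fun i hi => hx i (mem_of_mem_erase hi)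
  have hle : ∏ i ∈ s.erase j, y i ≤ ∏ i ∈ s.erase j, x i :=
    prod_le_prod (fun i hi => hy i (mem_of_mem_erase hi)) fun i hi => hyx i (mem_of_mem_erase hi)
  refine le_of_mul_le_mul_right ?_ hpos
  calc C * x j * ∏ i ∈ s.erase j, x i ≤ y j * ∏ i ∈ s.erase j, y i := by rwa [mul_assoc]
    _ ≤ y j * ∏ i ∈ s.erase j, x i := mul_le_mul_of_nonneg_left hle (hy j hj)

namespace InnerProductSpace

variable {ι E : Type*} [LinearOrder ι] [LocallyFiniteOrderBot ι] [WellFoundedLT ι]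
  [NormedAddCommGroup E] [InnerProductSpace ℝ E]

theorem inner_gramSchmidt_self (v : ι → E) (j : ι) :
    ⟪gramSchmidt ℝ v j, v j⟫ = ‖gramSchmidt ℝ v j‖ ^ 2 := by
  rw [gramSchmidt_def'' ℝ v j, inner_add_right, inner_sum, real_inner_self_eq_norm_sq, add_eq_left]
  refine sum_eq_zero fun i hi => ?_
  rw [real_inner_smul_right, gramSchmidt_orthogonal ℝ v (mem_Iio.1 hi).ne', mul_zero]

theorem norm_gramSchmidt_le (v : ι → E) (j : ι) : ‖gramSchmidt ℝ v j‖ ≤ ‖v j‖ := by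
  rcases (norm_nonneg (gramSchmidt ℝ v j)).eq_or_lt with h | h
  · rw [← h]; exact norm_nonneg _
  refine le_of_mul_le_mul_right ?_ h
  rw [← sq, ← inner_gramSchmidt_self, mul_comm]
  exact real_inner_le_norm _ _

theorem inner_sum_smul_gramSchmidt_of_isTop [Fintype ι] (v : ι → E) (a : ι → ℝ) {j : ι}
    (hj : IsTop j) :
    ⟪∑ i, a i • v i, gramSchmidt ℝ v j⟫ = a j * ‖gramSchmidt ℝ v j‖ ^ 2 := by
  rw [sum_inner, sum_eq_single j, real_inner_smul_left, real_inner_comm, inner_gramSchmidt_self]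
  · intro i _ hij
    rw [real_inner_smul_left, real_inner_comm,
      gramSchmidt_inv_triangular ℝ v ((hj i).lt_of_ne hij), mul_zero]
  · exact fun h => absurd (mem_univ j) h

theorem abs_mul_norm_gramSchmidt_le_of_isTop [Fintype ι] (v : ι → E) (a : ι → ℝ) {j : ι}
    (hj : IsTop j) : |a j| * ‖gramSchmidt ℝ v j‖ ≤ ‖∑ i, a i • v i‖ := by
  rcases (norm_nonneg (gramSchmidt ℝ v j)).eq_or_lt with h | h
  · rw [← h, mul_zero]; exact norm_nonneg _
  refine le_of_mul_le_mul_right ?_ h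
  calc |a j| * ‖gramSchmidt ℝ v j‖ * ‖gramSchmidt ℝ v j‖
      = |⟪∑ i, a i • v i, gramSchmidt ℝ v j⟫| := by
        rw [inner_sum_smul_gramSchmidt_of_isTop v a hj, abs_mul, abs_sq]; ring
    _ ≤ ‖∑ i, a i • v i‖ * ‖gramSchmidt ℝ v j‖ := abs_real_inner_le_norm _ _

noncomputable def gramSchmidtCoeff (v : ι → E) : Matrix ι ι ℝ :=
  of fun n i => if i = n then 1 else if i < n then
    ⟪gramSchmidt ℝ v i, v n⟫ / ‖gramSchmidt ℝ v i‖ ^ 2 else 0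

theorem gramSchmidtCoeff_isLowerTriangular (v : ι → E) :
    (gramSchmidtCoeff v).IsLowerTriangular := by
  intro n i (hni : n < i)
  simp [gramSchmidtCoeff, hni.ne', hni.not_gt]

theorem det_gramSchmidtCoeff [Fintype ι] (v : ι → E) : (gramSchmidtCoeff v).det = 1 := by
  rw [det_of_isLowerTriangular _ (gramSchmidtCoeff_isLowerTriangular v)]
  simp [gramSchmidtCoeff]

theorem sum_gramSchmidtCoeff_smul_gramSchmidt [Fintype ι] (v : ι → E) (n : ι) :
    ∑ i, gramSchmidtCoeff v n i • gramSchmidt ℝ v i = v n := by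
  have hzero : ∀ i ∈ univ, i ∉ Iic n → gramSchmidtCoeff v n i • gramSchmidt ℝ v i = 0 := by
    intro i _ hi
    have hni : n < i := not_le.1 (by simpa using hi)
    simp [gramSchmidtCoeff, hni.ne', hni.not_gt]
  rw [← sum_subset (subset_univ _) hzero, ← Iio_insert, sum_insert (by simp)]
  conv_rhs => rw [gramSchmidt_def'' ℝ v n]
  congr 1
  · simp [gramSchmidtCoeff]
  · refine sum_congr rfl fun i hi => ?_
    have hin : i < n := mem_Iio.1 hi
    simp [gramSchmidtCoeff, hin, hin.ne]

theorem gram_eq_gramSchmidtCoeff_mul [Fintype ι] (v : ι → E) :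
    gram ℝ v = gramSchmidtCoeff v * diagonal (fun i => ‖gramSchmidt ℝ v i‖ ^ 2) *
      (gramSchmidtCoeff v)ᵀ := by
  ext n p
  rw [mul_apply]
  simp only [mul_diagonal, transpose_apply, gram_apply]
  rw [← sum_gramSchmidtCoeff_smul_gramSchmidt v n, ← sum_gramSchmidtCoeff_smul_gramSchmidt v p,
    sum_inner]
  refine sum_congr rfl fun i _ => ?_
  rw [real_inner_smul_left, inner_sum, sum_eq_single i]
  · rw [real_inner_smul_right, real_inner_self_eq_norm_sq]; ring
  · intro j _ hji
    rw [real_inner_smul_right, gramSchmidt_orthogonal ℝ v hji.symm, mul_zero]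
  · exact fun h => absurd (mem_univ i) h

theorem det_gram_eq_prod_norm_gramSchmidt_sq [Fintype ι] (v : ι → E) :
    (gram ℝ v).det = ∏ i, ‖gramSchmidt ℝ v i‖ ^ 2 := by
  rw [gram_eq_gramSchmidtCoeff_mul, det_mul, det_mul, det_transpose, det_gramSchmidtCoeff,
    det_diagonal, one_mul, mul_one]

theorem sqrt_det_gram_eq_prod_norm_gramSchmidt [Fintype ι] (v : ι → E) :
    √(gram ℝ v).det = ∏ i, ‖gramSchmidt ℝ v i‖ := by
  rw [det_gram_eq_prod_norm_gramSchmidt_sq, prod_pow,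
    Real.sqrt_sq (prod_nonneg fun i _ => norm_nonneg _)]

theorem mul_norm_le_norm_gramSchmidt [Fintype ι] {v : ι → E} (hv : ∀ i, v i ≠ 0) {C : ℝ}
    (hdet : C * ∏ i, ‖v i‖ ≤ √(gram ℝ v).det) (j : ι) : C * ‖v j‖ ≤ ‖gramSchmidt ℝ v j‖ := by
  rw [sqrt_det_gram_eq_prod_norm_gramSchmidt] at hdet
  exact mul_le_of_mul_prod_le_prod_of_le (fun i _ => norm_pos_iff.2 (hv i))
    (fun i _ => norm_nonneg _) (fun i _ => norm_gramSchmidt_le v i) hdet (mem_univ j)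

theorem mul_abs_mul_norm_le_norm_sum_of_isTop [Fintype ι] {v : ι → E} (hv : ∀ i, v i ≠ 0)
    {C : ℝ} (hdet : C * ∏ i, ‖v i‖ ≤ √(gram ℝ v).det) (a : ι → ℝ) {j : ι} (hj : IsTop j) :
    C * |a j| * ‖v j‖ ≤ ‖∑ i, a i • v i‖ :=
  calc C * |a j| * ‖v j‖ = |a j| * (C * ‖v j‖) := by ring
    _ ≤ |a j| * ‖gramSchmidt ℝ v j‖ :=
      mul_le_mul_of_nonneg_left (mul_norm_le_norm_gramSchmidt hv hdet j) (abs_nonneg _)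
    _ ≤ ‖∑ i, a i • v i‖ := abs_mul_norm_gramSchmidt_le_of_isTop v a hj

end InnerProductSpace

theorem mul_abs_mul_norm_le_norm_sum {E : Type*} [NormedAddCommGroup E] [InnerProductSpace ℝ E]
    {r : ℕ} {u : Fin r → E} (hu : ∀ i, u i ≠ 0) {C : ℝ}
    (hdet : C * ∏ i, ‖u i‖ ≤ √(gram ℝ u).det) (a : Fin r → ℝ) (j : Fin r) :
    C * |a j| * ‖u j‖ ≤ ‖∑ i, a i • u i‖ := by
  obtain ⟨m, rfl⟩ : ∃ m, r = m + 1 := Nat.exists_eq_add_one_of_ne_zero j.pos.ne'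
  set σ := Equiv.swap j (Fin.last m)
  have hdetσ : C * ∏ i, ‖(u ∘ σ) i‖ ≤ √(gram ℝ (u ∘ σ)).det := by
    change C * ∏ i, ‖u (σ i)‖ ≤ √((gram ℝ u).submatrix σ σ).det
    rwa [det_submatrix_equiv_self, Equiv.prod_comp σ fun i => ‖u i‖]
  have h := mul_abs_mul_norm_le_norm_sum_of_isTop (fun i => hu (σ i)) hdetσ (a ∘ σ)
    (j := Fin.last m) Fin.le_last
  have hσ : σ (Fin.last m) = j := Equiv.swap_apply_right _ _
  simp only [Function.comp_apply] at h
  rwa [Equiv.sum_comp σ fun i => a i • u i, hσ] at h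

/-- fix `r ≥ 1` and `C > 0`. If `u₁,…,u_r` are linearly independent
vectors spanning a lattice with determinant `d(Λ) ≥ C|u₁|⋯|u_r|`, then there is
`c = c(r,C) > 0` with `|∑ a_j u_j|² ≥ c ∑ a_j² |u_j|²` for all real `a_j`. -/
theorem almost_orthogonal_lower_bound (r : ℕ) (hr : 1 ≤ r) (C : ℝ) (hC : 0 < C) :
    ∃ c : ℝ, 0 < c ∧ ∀ (n : ℕ) (u : Fin r → EuclideanSpace ℝ (Fin n)),
      LinearIndependent ℝ u →
      C * ∏ j, ‖u j‖ ≤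
        Real.sqrt (Matrix.det (Matrix.of fun i j => (inner ℝ (u i) (u j) : ℝ))) →
      ∀ a : Fin r → ℝ,
        c * ∑ j, (a j) ^ 2 * ‖u j‖ ^ 2 ≤ ‖∑ j, a j • u j‖ ^ 2 := by
  have hr' : (0 : ℝ) < r := by exact_mod_cast hr
  refine ⟨C ^ 2 / r, div_pos (by positivity) hr', fun n u hu hdet a => ?_⟩
  have hterm (j : Fin r) : C ^ 2 * (a j ^ 2 * ‖u j‖ ^ 2) ≤ ‖∑ i, a i • u i‖ ^ 2 :=
    calc C ^ 2 * (a j ^ 2 * ‖u j‖ ^ 2) = (C * |a j| * ‖u j‖) ^ 2 := by rw [← sq_abs (a j)]; ring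
      _ ≤ ‖∑ i, a i • u i‖ ^ 2 :=
        pow_le_pow_left₀ (by positivity) (mul_abs_mul_norm_le_norm_sum hu.ne_zero hdet a j) 2
  have hsum : ∑ j, C ^ 2 * (a j ^ 2 * ‖u j‖ ^ 2) ≤ ∑ _j : Fin r, ‖∑ i, a i • u i‖ ^ 2 :=
    sum_le_sum fun j _ => hterm j
  rw [← mul_sum, sum_const, card_univ, Fintype.card_fin, nsmul_eq_mul] at hsum
  rw [div_mul_eq_mul_div, div_le_iff₀ hr']
  linarith
end

section
/- Let B = (a_{ij}) be an r×r alternating real matrix. Suppose there exist indices i ≤ j with i + j ≤ r + 1 such that a_{st} = 0 for every pair s < t with s ≥ i and t ≥ j. Then rank B ≤ r - 1. -/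
open Matrix

/-- let `B` be an `r×r` alternating real matrix.  If there are
(1-based) indices `i ≤ j` with `i + j ≤ r + 1` such that `B_{st} = 0` for all
`s < t` with `s ≥ i` and `t ≥ j`, then `rank B ≤ r - 1`.  (Here `i j : Fin r`
are 0-based, so the condition `i + j ≤ r + 1` reads `(i+1) + (j+1) ≤ r + 1`.) -/
theorem alternating_rank_le_of_zero_block (r : ℕ) (B : Matrix (Fin r) (Fin r) ℝ)
    (hskew : Bᵀ = -B) (hdiag : ∀ i, B i i = 0)
    (i j : Fin r) (hij : i ≤ j) (hsum : (i : ℕ) + 1 + ((j : ℕ) + 1) ≤ r + 1)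
    (hzero : ∀ s t : Fin r, s < t → i ≤ s → j ≤ t → B s t = 0) :
    B.rank ≤ r - 1 := by
  -- key zero fact: entries B s t vanish when i ≤ s and j ≤ t
  have key : ∀ s t : Fin r, i ≤ s → j ≤ t → B s t = 0 := by
    intro s t hs ht
    rcases lt_trichotomy s t with h | h | h
    · exact hzero s t h hs ht
    · subst h; exact hdiag s
    · have h1 : B t s = 0 := hzero t s h (le_trans hij ht) (le_trans ht h.le)
      have h2 : B s t = -B t s := by
        have := congrFun (congrFun hskew t) s
        simp [Matrix.transpose_apply] at this
        linarith
      rw [h2, h1, neg_zero]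
  -- the spanning family: j columns plus i standard basis vectors
  let f : Fin (j : ℕ) ⊕ Fin (i : ℕ) → (Fin r → ℝ) := fun x =>
    match x with
    | Sum.inl t => Bᵀ ⟨t, lt_trans t.2 j.2⟩
    | Sum.inr s => Pi.single (⟨s, lt_trans s.2 i.2⟩ : Fin r) 1
  have hsub : Set.range Bᵀ ⊆ (Submodule.span ℝ (Set.range f) : Submodule ℝ (Fin r → ℝ)) := by
    rintro _ ⟨t, rfl⟩
    by_cases ht : (t : ℕ) < (j : ℕ)
    · exact Submodule.subset_span ⟨Sum.inl ⟨t, ht⟩, by simp [f]⟩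
    · push_neg at ht
      have htj : j ≤ t := ht
      -- column t has support in rows < i
      have hcol : ∀ s : Fin r, i ≤ s → Bᵀ t s = 0 := fun s hs => key s t hs htj
      have hrepr : Bᵀ t = ∑ s : Fin r, Bᵀ t s • (Pi.single s (1 : ℝ) : Fin r → ℝ) := by
        funext x
        simp [Finset.sum_apply, Pi.single_apply, mul_comm]
      rw [hrepr]
      refine Submodule.sum_mem _ fun s _ => ?_
      by_cases hsi : (s : ℕ) < (i : ℕ)
      · exact Submodule.smul_mem _ _ (Submodule.subset_span ⟨Sum.inr ⟨s, hsi⟩, by simp [f]⟩)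
      · push_neg at hsi
        rw [hcol s hsi, zero_smul]
        exact Submodule.zero_mem _
  calc B.rank = Module.finrank ℝ (Submodule.span ℝ (Set.range Bᵀ)) :=
        B.rank_eq_finrank_span_cols
    _ ≤ Module.finrank ℝ (Submodule.span ℝ (Set.range f)) :=
        Submodule.finrank_mono (Submodule.span_le.mpr hsub)
    _ ≤ Fintype.card (Fin (j : ℕ) ⊕ Fin (i : ℕ)) := finrank_range_le_card f
    _ ≤ r - 1 := by simp; omega
end

section
/- Let Λ ⊂ ℤⁿ be a primitive rank-r sublattice with ℤ-basis ℓ₁, …, ℓ_r, and let 𝒜(Λ) be the set of alternating n×n real matrices all of whose rows lie in ℝΛ and which have integer coordinates with respect to Λ, i.e., 𝒜(Λ) = {A ∈ M_n(ℝ)_alt : every row of A is in Λ}. Then the set {R_{ij} = ℓ_i ℓ_jᵀ - ℓ_j ℓ_iᵀ : 1 ≤ i < j ≤ r} is a ℤ-basis of the abelian group 𝒜(Λ). -/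
open Matrix Finset

/-!
Let `L` be the `r × n` matrix with rows `ℓᵢ`. Then `∑_{i<j} c_{ij} R_{ij} = Lᵀ C L`, where `C` is
the alternating matrix with entries `c_{ij}` above the diagonal, and `C ↦ Lᵀ C L` is injective
because the rows of `L` are independent; this gives uniqueness.

For existence, an alternating `A` with rows in `Λ` also has its columns in `Λ`. Write `A = B L`
and `Aᵀ = B' L`. Over `ℝ` the matrix `L` has a right inverse `N`, so `Bᵀ = Nᵀ Lᵀ Bᵀ = (Nᵀ B') L`:
the columns of `B` lie in `ℝΛ`, hence in `Λ` by primitivity. Thus `Bᵀ = D L` and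
`A = Lᵀ Dᵀ L`, and injectivity of `C ↦ Lᵀ C L` forces `Dᵀ` to be alternating.
-/

theorem Fintype.sum_sum_eq_sum_triangle_add {ι M : Type*} [LinearOrder ι] [Fintype ι]
    [AddCommMonoid M] (g : ι → ι → M) (hg : ∀ i, g i i = 0) :
    ∑ i, ∑ j, g i j = ∑ q : {q : ι × ι // q.1 < q.2}, (g q.1.1 q.1.2 + g q.1.2 q.1.1) := by
  calc ∑ i, ∑ j, g i j = ∑ p : ι × ι, g p.1 p.2 := (Fintype.sum_prod_type' g).symm
    _ = ∑ p : ι × ι,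
          ((if p.1 < p.2 then g p.1 p.2 else 0) + if p.2 < p.1 then g p.1 p.2 else 0) := by
      refine Fintype.sum_congr _ _ fun ⟨i, j⟩ => ?_
      rcases lt_trichotomy i j with h | h | h
      · simp [h, h.not_gt]
      · simp [h, hg]
      · simp [h, h.not_gt]
    _ = ∑ p : ι × ι, if p.1 < p.2 then g p.1 p.2 + g p.2 p.1 else 0 := by
      rw [sum_add_distrib, Fintype.sum_equiv (Equiv.prodComm ι ι)
        (fun p => if p.2 < p.1 then g p.1 p.2 else 0)
        (fun p => if p.1 < p.2 then g p.2 p.1 else 0) fun _ => rfl, ← sum_add_distrib]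
      exact Fintype.sum_congr _ _ fun p => by split_ifs <;> simp
    _ = _ := by rw [← sum_filter, sum_subtype]; simp

namespace Matrix

lemma diag_eq_zero_of_transpose_eq_neg {ι R : Type*} [AddGroup R] [IsAddTorsionFree R]
    {D : Matrix ι ι R} (hD : Dᵀ = -D) (i : ι) : D i i = 0 :=
  self_eq_neg.1 (congr_fun₂ hD i i)

section SkewOfUpper

variable {ι R : Type*} [LinearOrder ι] [AddGroup R]

def skewOfUpper (c : {q : ι × ι // q.1 < q.2} → R) : Matrix ι ι R :=
  of fun i j => if h : i < j then c ⟨(i, j), h⟩ else if h' : j < i then -c ⟨(j, i), h'⟩ else 0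

lemma skewOfUpper_apply_of_lt (c : {q : ι × ι // q.1 < q.2} → R) {i j : ι} (h : i < j) :
    skewOfUpper c i j = c ⟨(i, j), h⟩ := by
  simp [skewOfUpper, h]

lemma skewOfUpper_apply_of_gt (c : {q : ι × ι // q.1 < q.2} → R) {i j : ι} (h : j < i) :
    skewOfUpper c i j = -c ⟨(j, i), h⟩ := by
  simp [skewOfUpper, h, h.not_gt]

@[simp]
lemma skewOfUpper_apply_self (c : {q : ι × ι // q.1 < q.2} → R) (i : ι) :
    skewOfUpper c i i = 0 := by
  simp [skewOfUpper]

lemma transpose_skewOfUpper (c : {q : ι × ι // q.1 < q.2} → R) :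
    (skewOfUpper c)ᵀ = -skewOfUpper c := by
  ext i j
  rcases lt_trichotomy i j with h | rfl | h
  · simp [skewOfUpper_apply_of_lt c h, skewOfUpper_apply_of_gt c h]
  · simp
  · simp [skewOfUpper_apply_of_lt c h, skewOfUpper_apply_of_gt c h]

lemma skewOfUpper_injective :
    Function.Injective (skewOfUpper : ({q : ι × ι // q.1 < q.2} → R) → Matrix ι ι R) :=
  fun c c' h => funext fun q => by
    simpa [skewOfUpper_apply_of_lt _ q.2] using congr_fun₂ h q.1.1 q.1.2

lemma skewOfUpper_eq_self [IsAddTorsionFree R] {D : Matrix ι ι R} (hD : Dᵀ = -D) :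
    skewOfUpper (fun q => D q.1.1 q.1.2) = D := by
  ext i j
  rcases lt_trichotomy i j with h | rfl | h
  · exact skewOfUpper_apply_of_lt _ h
  · simp [diag_eq_zero_of_transpose_eq_neg hD]
  · simpa [skewOfUpper_apply_of_gt _ h] using (congr_fun₂ hD j i).symm

lemma sum_smul_sub_eq_sum_sum_skewOfUpper [Fintype ι] {S M : Type*} [Ring S] [AddCommGroup M]
    [Module S M] (c : {q : ι × ι // q.1 < q.2} → S) (f : ι → ι → M) :
    ∑ q : {q : ι × ι // q.1 < q.2}, c q • (f q.1.1 q.1.2 - f q.1.2 q.1.1)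
      = ∑ i, ∑ j, skewOfUpper c i j • f i j := by
  rw [Fintype.sum_sum_eq_sum_triangle_add _ fun i => by simp]
  refine Fintype.sum_congr _ _ fun q => ?_
  rw [skewOfUpper_apply_of_lt c q.2, skewOfUpper_apply_of_gt c q.2, smul_sub, neg_smul,
    sub_eq_add_neg]

end SkewOfUpper

section RowSpan

variable {l m n R : Type*} [Fintype m]

lemma transpose_mul_mul_eq_sum_sum_vecMulVec [Fintype n] [CommSemiring R] (L : Matrix m n R)
    (C : Matrix m m R) : Lᵀ * C * L = ∑ i, ∑ j, C i j • vecMulVec (L i) (L j) := by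
  ext a b
  simp only [mul_apply, transpose_apply, sum_apply, smul_apply, vecMulVec_apply, smul_eq_mul,
    sum_mul]
  rw [sum_comm]
  exact sum_congr rfl fun i _ => sum_congr rfl fun j _ => by ring

lemma sum_smul_sub_vecMulVec_eq_transpose_mul_skewOfUpper_mul [Fintype n] [CommRing R]
    [LinearOrder m] (L : Matrix m n R) (c : {q : m × m // q.1 < q.2} → R) :
    ∑ q : {q : m × m // q.1 < q.2},
        c q • (vecMulVec (L q.1.1) (L q.1.2) - vecMulVec (L q.1.2) (L q.1.1))
      = Lᵀ * skewOfUpper c * L := by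
  rw [transpose_mul_mul_eq_sum_sum_vecMulVec]
  exact sum_smul_sub_eq_sum_sum_skewOfUpper c fun i j => vecMulVec (L i) (L j)

lemma rows_mem_span_iff_exists_eq_mul [Semiring R] (L : Matrix m n R) (A : Matrix l n R) :
    (∀ a, A a ∈ Submodule.span R (Set.range L)) ↔ ∃ B : Matrix l m R, A = B * L := by
  change (∀ a, A a ∈ Submodule.span R (Set.range L.row)) ↔ _
  simp_rw [← range_vecMulLinear]
  constructor
  · intro h
    choose b hb using h
    exact ⟨of b, funext fun a => ((hb a).symm.trans (mul_apply_eq_vecMul (of b) L a).symm)⟩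
  · rintro ⟨B, rfl⟩ a
    exact ⟨B a, (mul_apply_eq_vecMul B L a).symm⟩

lemma mul_left_injective_of_linearIndependent [Semiring R] {L : Matrix m n R}
    (hL : LinearIndependent R L.row) : Function.Injective fun X : Matrix l m R => X * L :=
  fun X Y h => funext fun a => vecMul_injective_iff.2 hL <| by
    simpa only [mul_apply_eq_vecMul] using congr_fun h a

lemma transpose_mul_mul_injective [CommSemiring R] {L : Matrix m n R}
    (hL : LinearIndependent R L.row) : Function.Injective fun C : Matrix m m R => Lᵀ * C * L := by
  intro C C' h
  have h₁ : Lᵀ * C = Lᵀ * C' := mul_left_injective_of_linearIndependent hL h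
  apply transpose_injective
  apply mul_left_injective_of_linearIndependent hL
  simpa only [transpose_mul, transpose_transpose] using congr_arg transpose h₁

lemma exists_mul_eq_one_of_linearIndependent [Fintype n] [DecidableEq m] {K : Type*} [Field K]
    {L : Matrix m n K} (hL : LinearIndependent K L.row) : ∃ N : Matrix n m K, L * N = 1 := by
  refine mulVec_surjective_iff_exists_right_inverse.1
    ((LinearMap.range_eq_top (f := L.mulVecLin)).1 ?_)
  refine Submodule.eq_top_of_finrank_eq ?_
  rw [← rank, hL.rank_matrix, Module.finrank_fintype_fun_eq_card]

end RowSpan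

lemma exists_eq_transpose_mul_mul_of_mem_span {ι n : Type*} [Fintype ι] [Fintype n]
    [DecidableEq ι] {L : Matrix ι n ℤ} (hL : LinearIndependent ℤ L.row)
    (hprim : ∀ v : n → ℤ,
      (fun k => (v k : ℝ)) ∈ Submodule.span ℝ (Set.range fun i => fun k => (L i k : ℝ)) →
      v ∈ Submodule.span ℤ (Set.range L))
    {A : Matrix n n ℤ} (hrows : ∀ a, A a ∈ Submodule.span ℤ (Set.range L))
    (hcols : ∀ a, Aᵀ a ∈ Submodule.span ℤ (Set.range L)) :
    ∃ D : Matrix ι ι ℤ, A = Lᵀ * D * L := by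
  obtain ⟨B, rfl⟩ := (rows_mem_span_iff_exists_eq_mul L A).1 hrows
  obtain ⟨B', hB'⟩ := (rows_mem_span_iff_exists_eq_mul L _).1 hcols
  set φ := Int.castRingHom ℝ
  have hLφ : LinearIndependent ℝ (L.map φ).row := by
    have hrow : (L.map φ).row = fun i => algebraMap ℤ ℝ ∘ L.row i := by
      funext i k; simp [φ]
    rw [hrow]
    exact (linearIndependent_algebraMap_comp_iff (S := ℝ)).2 hL
  obtain ⟨N, hN⟩ := exists_mul_eq_one_of_linearIndependent hLφ
  have hBt : (Bᵀ).map φ = (Nᵀ * B'.map φ) * L.map φ := by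
    calc (Bᵀ).map φ = (L.map φ * N)ᵀ * (Bᵀ).map φ := by rw [hN, transpose_one, Matrix.one_mul]
      _ = Nᵀ * ((B * L)ᵀ).map φ := by
        simp only [transpose_mul, Matrix.map_mul, transpose_map, Matrix.mul_assoc]
      _ = (Nᵀ * B'.map φ) * L.map φ := by rw [hB', Matrix.map_mul, Matrix.mul_assoc]
  have hBt_rows : ∀ i, Bᵀ i ∈ Submodule.span ℤ (Set.range L) := fun i =>
    hprim _ ((rows_mem_span_iff_exists_eq_mul (L.map φ) _).2 ⟨_, hBt⟩ i)
  obtain ⟨D, hD⟩ := (rows_mem_span_iff_exists_eq_mul L _).1 hBt_rows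
  exact ⟨Dᵀ, by rw [← transpose_transpose B, hD, transpose_mul]⟩

end Matrix

/-- if `Λ ⊂ ℤⁿ` is a primitive rank-`r` sublattice with ℤ-basis
`ℓ₁,…,ℓ_r`, then `{R_{ij} = ℓ_i ℓ_jᵀ - ℓ_j ℓ_iᵀ : i < j}` is a ℤ-basis of the
group `𝒜(Λ)` of alternating `n×n` integer matrices all of whose rows lie in `Λ`:
a matrix is in `𝒜(Λ)` iff it is uniquely an integer combination of the `R_{ij}`. -/
theorem R_basis_of_alt_lattice (n r : ℕ) (ℓ : Fin r → (Fin n → ℤ))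
    (hli : LinearIndependent ℤ ℓ)
    (hprim : ∀ v : Fin n → ℤ,
      (fun k => (v k : ℝ)) ∈ Submodule.span ℝ (Set.range fun i => fun k => (ℓ i k : ℝ)) →
      v ∈ Submodule.span ℤ (Set.range ℓ)) :
    ∀ A : Matrix (Fin n) (Fin n) ℤ,
      (Aᵀ = -A ∧ (∀ i, A i i = 0) ∧
        ∀ a, A a ∈ Submodule.span ℤ (Set.range ℓ)) ↔
      ∃! c : {q : Fin r × Fin r // q.1 < q.2} → ℤ,
        A = ∑ q : {q : Fin r × Fin r // q.1 < q.2},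
          c q • (vecMulVec (ℓ q.1.1) (ℓ q.1.2) - vecMulVec (ℓ q.1.2) (ℓ q.1.1)) := by
  intro A
  set L : Matrix (Fin r) (Fin n) ℤ := of ℓ
  have hL : LinearIndependent ℤ L.row := hli
  have hsum (c : {q : Fin r × Fin r // q.1 < q.2} → ℤ) :
      ∑ q : {q : Fin r × Fin r // q.1 < q.2},
          c q • (vecMulVec (ℓ q.1.1) (ℓ q.1.2) - vecMulVec (ℓ q.1.2) (ℓ q.1.1))
        = Lᵀ * skewOfUpper c * L :=
    sum_smul_sub_vecMulVec_eq_transpose_mul_skewOfUpper_mul L c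
  have hinj : Function.Injective
      fun c : {q : Fin r × Fin r // q.1 < q.2} → ℤ => Lᵀ * skewOfUpper c * L :=
    (transpose_mul_mul_injective hL).comp skewOfUpper_injective
  simp_rw [hsum, eq_comm (a := A), ← hinj.mem_range_iff_existsUnique]
  constructor
  · rintro ⟨hAT, -, hrows⟩
    obtain ⟨D, rfl⟩ := exists_eq_transpose_mul_mul_of_mem_span hL hprim hrows
      fun a => by rw [hAT]; exact neg_mem (hrows a)
    have hD : Dᵀ = -D := transpose_mul_mul_injective hL <| by
      dsimp only
      rw [Matrix.mul_neg, Matrix.neg_mul, ← hAT]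
      simp only [transpose_mul, transpose_transpose, Matrix.mul_assoc]
    exact ⟨_, congr_arg (Lᵀ * · * L) (skewOfUpper_eq_self hD)⟩
  · rintro ⟨c, rfl⟩
    have hT : (Lᵀ * skewOfUpper c * L)ᵀ = -(Lᵀ * skewOfUpper c * L) := by
      simp [transpose_mul, transpose_skewOfUpper, Matrix.mul_assoc]
    exact ⟨hT, diag_eq_zero_of_transpose_eq_neg hT,
      (rows_mem_span_iff_exists_eq_mul L _).2 ⟨_, rfl⟩⟩
end

section
/- Let Λ ⊂ ℝⁿ be a rank-r lattice with basis ℓ₁, …, ℓ_r, and let 𝒜(Λ) be the lattice of alternating n×n matrices with all rows in Λ, viewed inside M_n(ℝ) ≅ ℝ^{n²} with the Frobenius norm. Then d(𝒜(Λ)) = 2^{r(r-1)/4} · d(Λ)^{r-1}, where d denotes the lattice determinant (covolume in the spanned subspace). -/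
/-!
For the Frobenius product, `⟪ℓᵢℓⱼᵀ - ℓⱼℓᵢᵀ, ℓₖℓₗᵀ - ℓₗℓₖᵀ⟫ = 2 (GᵢₖGⱼₗ - GᵢₗGⱼₖ)` with `G` the
Gram matrix of the `ℓᵢ`, so the Gram matrix of the basis of `𝒜(Λ)` is `2 • C₂(G)`, where `C₂` is
the second compound matrix (the matrix of `2 × 2` minors). By the Sylvester–Franke theorem,
`det C₂(G) = (det G) ^ (r - 1)`: `C₂` is multiplicative (Cauchy–Binet), so since every matrix over
a field is a product of transvections and a diagonal matrix it suffices to treat triangular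
matrices, and for those `C₂` is triangular for the lexicographic order on pairs.
-/

open Matrix Finset

abbrev StrictPairs (ι : Type*) [LT ι] := {q : ι × ι // q.1 < q.2}

namespace StrictPairs

variable {ι M : Type*} [Fintype ι] [LinearOrder ι] [CommMonoid M]

@[to_additive]
theorem prod_eq_prod_prod_ite (f : ι → ι → M) :
    ∏ q : StrictPairs ι, f q.1.1 q.1.2 = ∏ i, ∏ j, if i < j then f i j else 1 := by
  rw [← Fintype.prod_prod_type', ← prod_filter]
  exact (prod_subtype _ (by simp) (fun q : ι × ι => f q.1 q.2)).symm

@[to_additive]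
theorem prod_mul_swap (f : ι → ι → M) :
    ∏ q : StrictPairs ι, f q.1.1 q.1.2 * f q.1.2 q.1.1 = ∏ i, ∏ j ∈ univ.erase i, f i j := by
  have hsplit (i j : ι) : (if j ≠ i then f i j else 1) =
      (if i < j then f i j else 1) * (if j < i then f i j else 1) := by
    rcases lt_trichotomy i j with h | rfl | h
    · simp [h, h.ne', h.not_gt]
    · simp
    · simp [h, h.ne, h.not_gt]
  rw [prod_mul_distrib, prod_eq_prod_prod_ite, prod_eq_prod_prod_ite (fun i j => f j i),
    prod_comm (f := fun i j => if i < j then f j i else 1)]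
  simp_rw [← filter_ne', prod_filter, hsplit, prod_mul_distrib]

theorem prod_fst_mul_snd (f : ι → M) :
    ∏ q : StrictPairs ι, f q.1.1 * f q.1.2 = (∏ i, f i) ^ (Fintype.card ι - 1) := by
  rw [prod_mul_swap (fun i _ => f i), ← prod_pow]
  simp [prod_const, card_erase_of_mem]

theorem two_mul_card :
    2 * Fintype.card (StrictPairs ι) = Fintype.card ι * (Fintype.card ι - 1) := by
  rw [mul_comm]
  simpa [card_erase_of_mem] using sum_add_swap (M := ℕ) fun (_ _ : ι) => 1

theorem sum_sum_eq_sum_add_swap {R : Type*} [AddCommMonoid R] (g : ι → ι → R)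
    (hg : ∀ i, g i i = 0) :
    ∑ i, ∑ j, g i j = ∑ q : StrictPairs ι, (g q.1.1 q.1.2 + g q.1.2 q.1.1) := by
  rw [sum_add_swap]
  exact sum_congr rfl fun i _ => (sum_erase _ (hg i)).symm

end StrictPairs

namespace Matrix

variable {R : Type*} [CommRing R]

section SecondCompound

variable {ι : Type*} [LinearOrder ι]

def secondCompound (A : Matrix ι ι R) : Matrix (StrictPairs ι) (StrictPairs ι) R :=
  of fun q q' => A q.1.1 q'.1.1 * A q.1.2 q'.1.2 - A q.1.1 q'.1.2 * A q.1.2 q'.1.1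

theorem secondCompound_apply (A : Matrix ι ι R) (q q' : StrictPairs ι) :
    secondCompound A q q' = A q.1.1 q'.1.1 * A q.1.2 q'.1.2 - A q.1.1 q'.1.2 * A q.1.2 q'.1.1 :=
  rfl

theorem secondCompound_transpose (A : Matrix ι ι R) :
    secondCompound Aᵀ = (secondCompound A)ᵀ := by
  ext q q'
  simp only [secondCompound_apply, transpose_apply]
  ring

theorem secondCompound_mul [Fintype ι] (A B : Matrix ι ι R) :
    secondCompound (A * B) = secondCompound A * secondCompound B := by
  ext ⟨⟨i, j⟩, -⟩ ⟨⟨k, l⟩, -⟩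
  simp only [secondCompound_apply, mul_apply]
  rw [sum_mul_sum, sum_mul_sum, ← sum_sub_distrib]
  simp_rw [← sum_sub_distrib]
  -- the terms `p = q` vanish, and the terms `(p, q)`, `(q, p)` combine into a minor of `A`
  rw [StrictPairs.sum_sum_eq_sum_add_swap _ (fun p => by ring)]
  exact sum_congr rfl fun q _ => by ring

theorem blockTriangular_secondCompound {A : Matrix ι ι R} (hA : A.IsUpperTriangular) :
    (secondCompound A).BlockTriangular fun q => toLex q.1 := by
  rintro ⟨⟨i, j⟩, hij⟩ ⟨⟨k, l⟩, hkl⟩ hlt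
  simp only [Prod.Lex.toLex_lt_toLex] at hlt
  rw [secondCompound_apply]
  rcases hlt with hki | ⟨rfl, hlj⟩
  · simp [hA hki, hA (hki.trans hij)]
  · simp [hA hlj, hA hij]

theorem det_secondCompound_of_isUpperTriangular [Fintype ι] {A : Matrix ι ι R}
    (hA : A.IsUpperTriangular) : (secondCompound A).det = A.det ^ (Fintype.card ι - 1) := by
  let : LinearOrder (StrictPairs ι) :=
    LinearOrder.lift' (fun q => toLex q.1) (toLex.injective.comp Subtype.val_injective)
  have hdiag (q : StrictPairs ι) : secondCompound A q q = A q.1.1 q.1.1 * A q.1.2 q.1.2 := by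
    simp [secondCompound_apply, hA q.2]
  rw [det_of_isUpperTriangular (blockTriangular_secondCompound hA), det_of_isUpperTriangular hA]
  simp_rw [hdiag]
  exact StrictPairs.prod_fst_mul_snd fun i => A i i

theorem det_secondCompound_of_isLowerTriangular [Fintype ι] {A : Matrix ι ι R}
    (hA : A.IsLowerTriangular) : (secondCompound A).det = A.det ^ (Fintype.card ι - 1) := by
  rw [← det_transpose, ← secondCompound_transpose, ← det_transpose A]
  exact det_secondCompound_of_isUpperTriangular hA.transpose

theorem det_secondCompound {K : Type*} [Field K] [Fintype ι] (A : Matrix ι ι K) :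
    (secondCompound A).det = A.det ^ (Fintype.card ι - 1) := by
  induction A using diagonal_transvection_induction with
  | hdiag D _ => exact det_secondCompound_of_isUpperTriangular (blockTriangular_diagonal D)
  | htransvec t =>
    rcases t.hij.lt_or_gt with h | h
    · exact det_secondCompound_of_isUpperTriangular (blockTriangular_transvection h.le _)
    · exact det_secondCompound_of_isLowerTriangular (blockTriangular_transvection' h.le _)
  | hmul A B hA hB => rw [secondCompound_mul, det_mul, det_mul, hA, hB, mul_pow]

end SecondCompound

variable {m : Type*} [Fintype m]

theorem sum_sum_vecMulVec_mul_vecMulVec (u v u' v' : m → R) :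
    ∑ a, ∑ b, vecMulVec u v a b * vecMulVec u' v' a b = (u ⬝ᵥ u') * (v ⬝ᵥ v') := by
  simp only [vecMulVec_apply, dotProduct, sum_mul_sum]
  exact sum_congr rfl fun a _ => sum_congr rfl fun b _ => by ring

theorem sum_sum_wedge_mul_wedge (u v u' v' : m → R) :
    ∑ a, ∑ b, (vecMulVec u v - vecMulVec v u) a b * (vecMulVec u' v' - vecMulVec v' u') a b =
      2 * ((u ⬝ᵥ u') * (v ⬝ᵥ v') - (u ⬝ᵥ v') * (v ⬝ᵥ u')) := by
  simp only [sub_apply, sub_mul, mul_sub, sum_sub_distrib, sum_sum_vecMulVec_mul_vecMulVec]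
  rw [dotProduct_comm v u', dotProduct_comm v v']
  ring

end Matrix

theorem Real.sqrt_pow_of_nonneg {x : ℝ} (hx : 0 ≤ x) (m : ℕ) : √(x ^ m) = √x ^ m := by
  rw [Real.sqrt_eq_iff_eq_sq (by positivity) (by positivity), ← pow_mul, mul_comm, pow_mul,
    Real.sq_sqrt hx]

theorem det_alt_lattice_general (n r : ℕ) (ℓ : Fin r → (Fin n → ℝ)) :
    Real.sqrt
        (Matrix.det (Matrix.of
          (fun q q' : {q : Fin r × Fin r // q.1 < q.2} =>
            ∑ a, ∑ b,
              (vecMulVec (ℓ q.1.1) (ℓ q.1.2) - vecMulVec (ℓ q.1.2) (ℓ q.1.1)) a b *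
              (vecMulVec (ℓ q'.1.1) (ℓ q'.1.2) - vecMulVec (ℓ q'.1.2) (ℓ q'.1.1)) a b))) =
      (2 : ℝ) ^ (((r : ℝ) * ((r : ℝ) - 1)) / 4) *
        Real.sqrt (Matrix.det (Matrix.of fun i j : Fin r => ∑ k, ℓ i k * ℓ j k)) ^ (r - 1) := by
  set G : Matrix (Fin r) (Fin r) ℝ := of fun i j => ∑ k, ℓ i k * ℓ j k
  have hgram : of (fun q q' : StrictPairs (Fin r) => ∑ a, ∑ b,
      (vecMulVec (ℓ q.1.1) (ℓ q.1.2) - vecMulVec (ℓ q.1.2) (ℓ q.1.1)) a b *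
      (vecMulVec (ℓ q'.1.1) (ℓ q'.1.2) - vecMulVec (ℓ q'.1.2) (ℓ q'.1.1)) a b) =
      (2 : ℝ) • secondCompound G := by
    ext q q'
    exact sum_sum_wedge_mul_wedge (ℓ q.1.1) (ℓ q.1.2) (ℓ q'.1.1) (ℓ q'.1.2)
  have hG : 0 ≤ G.det := by
    have : G = of ℓ * (of ℓ)ᴴ := by ext i j; simp [G, mul_apply]
    exact this ▸ (posSemidef_self_mul_conjTranspose _).det_nonneg
  have hcard : (Fintype.card (StrictPairs (Fin r)) : ℝ) = r * (r - 1) / 2 := by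
    have h := StrictPairs.two_mul_card (ι := Fin r)
    rw [Fintype.card_fin] at h
    rcases r with _ | r
    · simp_all
    · have := congrArg (Nat.cast (R := ℝ)) h
      push_cast at this ⊢
      linarith
  rw [hgram, det_smul, det_secondCompound, Fintype.card_fin, Real.sqrt_mul (by positivity),
    Real.sqrt_pow_of_nonneg hG, Real.sqrt_eq_rpow, ← Real.rpow_natCast,
    ← Real.rpow_mul zero_le_two, hcard]
  ring_nf

/-- if `Λ ⊂ ℝⁿ` is a rank-`r` lattice with basis `ℓ₁,…,ℓ_r`, then
the lattice `𝒜(Λ)` of alternating matrices with rows in `Λ` (with ℤ-basis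
`R_{ij} = ℓ_i ℓ_jᵀ - ℓ_j ℓ_iᵀ`, `i<j`, and the Frobenius inner product)
has determinant `d(𝒜(Λ)) = 2^{r(r-1)/4} · d(Λ)^{r-1}`, where the lattice
determinant is the square root of the Gram determinant of a basis. -/
theorem det_alt_lattice (n r : ℕ) (ℓ : Fin r → (Fin n → ℝ))
    (hli : LinearIndependent ℝ ℓ) :
    Real.sqrt
        (Matrix.det (Matrix.of
          (fun q q' : {q : Fin r × Fin r // q.1 < q.2} =>
            ∑ a, ∑ b,
              (vecMulVec (ℓ q.1.1) (ℓ q.1.2) - vecMulVec (ℓ q.1.2) (ℓ q.1.1)) a b *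
              (vecMulVec (ℓ q'.1.1) (ℓ q'.1.2) - vecMulVec (ℓ q'.1.2) (ℓ q'.1.1)) a b))) =
      (2 : ℝ) ^ (((r : ℝ) * ((r : ℝ) - 1)) / 4) *
        Real.sqrt (Matrix.det (Matrix.of fun i j : Fin r => ∑ k, ℓ i k * ℓ j k)) ^ (r - 1) :=
  det_alt_lattice_general n r ℓ
end

section
/- The number of elliptic curves y² = x³ + Ax + B with A, B ∈ ℤ, 4A³ + 27B² ≠ 0, not divisible (i.e., no prime p with p⁴ | A and p⁶ | B), and height max(|4A³|, |27B²|) ≤ H, is asymptotic to κ H^{5/6} as H → ∞, where κ = 2^{4/3} · 3^{-3/2} / ζ(10). -/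
/-!
The nonsingular pairs of height at most `x` are those of the box `|A| ≤ (x/4)^{1/3}`,
`|B| ≤ (x/27)^{1/2}` minus the singular ones, which are negligible since `4A³ = -27B²` determines
`A` from `B`; so their number `S(x)` is `O(x^{5/6})` and `~ 2^{4/3} 3^{-3/2} x^{5/6}`.
Call `d` a weighted divisor of `(A, B)` if `d⁴ ∣ A` and `d⁶ ∣ B`, i.e. `(A, B) = (d⁴A', d⁶B')`, a
pair of height `d¹²` times that of `(A', B')`. Being closed under `lcm` and divisors, the weighted
divisors of a nonsingular pair are the divisors of the largest one, so Möbius inversion gives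
`N(x) = ∑_d μ(d) S(x/d¹²)` for the number `N(x)` of minimal pairs. Dominated convergence then
yields `N(x)/x^{5/6} → 2^{4/3} 3^{-3/2} ∑_d μ(d)/d¹⁰ = 2^{4/3} 3^{-3/2}/ζ(10)`.
-/

open Filter Topology
open scoped ArithmeticFunction.Moebius

namespace WeierstrassCount

noncomputable section

theorem dvd_findGreatest_iff {P : ℕ → Prop} [DecidablePred P] {N : ℕ} (h1 : P 1)
    (hle : ∀ d, P d → d ≤ N) (hdvd : ∀ {d e}, d ∣ e → P e → P d)
    (hlcm : ∀ {d e}, P d → P e → P (Nat.lcm d e)) {d : ℕ} :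
    d ∣ Nat.findGreatest P N ↔ P d := by
  set g := Nat.findGreatest P N
  have hg : P g := Nat.findGreatest_spec (hle 1 h1) h1
  have h0 : ¬P 0 := fun h => by have := hle (N + 1) (hdvd (dvd_zero _) h); omega
  refine ⟨fun h => hdvd h hg, fun hd => ?_⟩
  have hd0 : d ≠ 0 := by rintro rfl; exact h0 hd
  have hg0 : g ≠ 0 := fun h => h0 (h ▸ hg)
  have hlcm_pos : 0 < Nat.lcm d g := Nat.pos_of_ne_zero (Nat.lcm_ne_zero hd0 hg0)
  have hlcm_eq : Nat.lcm d g = g :=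
    le_antisymm (Nat.le_findGreatest (hle _ (hlcm hd hg)) (hlcm hd hg))
      (Nat.le_of_dvd hlcm_pos (Nat.dvd_lcm_right d g))
  exact hlcm_eq ▸ Nat.dvd_lcm_left d g

theorem sum_divisors_moebius (n : ℕ) : ∑ d ∈ n.divisors, μ d = if n = 1 then 1 else 0 := by
  have h := congrArg (· n) ArithmeticFunction.moebius_mul_coe_zeta
  simp only [ArithmeticFunction.coe_mul_zeta_apply, ArithmeticFunction.one_apply] at h
  exact h

theorem tendsto_tsum_moebius_mul_div_rpow {f : ℝ → ℝ} {L C s : ℝ} {k : ℕ}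
    (hf : Tendsto (fun x => f x / x ^ s) atTop (𝓝 L))
    (hbound : ∀ y, 0 ≤ y → |f y| ≤ C * y ^ s) (hks : 1 < k * s) :
    Tendsto (fun x => ∑' d : ℕ, μ d * f (x / (d : ℝ) ^ k) / x ^ s) atTop
      (𝓝 (L * ∑' d : ℕ, μ d / (d : ℝ) ^ (k * s))) := by
  have hs : 0 < s := pos_of_mul_pos_right (by linarith) (Nat.cast_nonneg k)
  have hscale : ∀ d : ℕ, d ≠ 0 → ∀ x : ℝ, 0 < x →
      (x / (d : ℝ) ^ k) ^ s = x ^ s / (d : ℝ) ^ (k * s) := fun d hd x hx => by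
    rw [Real.div_rpow hx.le (by positivity), ← Real.rpow_natCast,
      ← Real.rpow_mul (Nat.cast_nonneg d)]
  rw [← tsum_mul_left]
  refine tendsto_tsum_of_dominated_convergence (bound := fun d : ℕ => |C| / (d : ℝ) ^ (k * s))
    ((Real.summable_one_div_nat_rpow.mpr hks).mul_left |C| |>.congr fun d => by ring) ?_ ?_
  · intro d
    rcases eq_or_ne d 0 with rfl | hd
    · simp
    have hdk : (0 : ℝ) < (d : ℝ) ^ k := by positivity
    have hlim := (hf.comp (tendsto_id.atTop_div_const hdk)).const_mul (μ d / (d : ℝ) ^ (k * s))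
    rw [mul_comm L]
    refine hlim.congr' ?_
    filter_upwards [eventually_gt_atTop 0] with x hx
    have : (0 : ℝ) < (d : ℝ) ^ (k * s) := by positivity
    simp only [Function.comp_apply, id, hscale d hd x hx]
    field_simp
  · filter_upwards [eventually_gt_atTop 0] with x hx d
    rcases eq_or_ne d 0 with rfl | hd
    · have : (0 : ℝ) ≤ |C| / (0 : ℝ) ^ (k * s) := by positivity
      simpa using this
    have hxs := Real.rpow_pos_of_pos hx s
    have hμ : |(μ d : ℝ)| ≤ 1 := by exact_mod_cast ArithmeticFunction.abs_moebius_le_one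
    have hy : 0 ≤ x / (d : ℝ) ^ k := by positivity
    calc ‖μ d * f (x / (d : ℝ) ^ k) / x ^ s‖ = |(μ d : ℝ)| * |f (x / (d : ℝ) ^ k)| / x ^ s := by
          rw [Real.norm_eq_abs, abs_div, abs_mul, abs_of_pos hxs]
      _ ≤ 1 * (|C| * (x / (d : ℝ) ^ k) ^ s) / x ^ s := by
          gcongr
          exact (hbound _ hy).trans (mul_le_mul_of_nonneg_right (le_abs_self C) (by positivity))
      _ = |C| / (d : ℝ) ^ (k * s) := by
          rw [hscale d hd x hx]; field_simp

theorem tsum_moebius_div_rpow_mul_tsum_one_div_rpow {s : ℝ} (hs : 1 < s) :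
    (∑' d : ℕ, μ d / (d : ℝ) ^ s) * ∑' m : ℕ, 1 / ((m : ℝ) + 1) ^ s = 1 := by
  have hs' : 1 < (s : ℂ).re := by simpa using hs
  have hζ := LSeries_one_mul_Lseries_moebius hs'
  rw [LSeries_one_eq_riemannZeta hs', zeta_eq_tsum_one_div_nat_add_one_cpow hs', LSeries] at hζ
  apply Complex.ofReal_injective
  rw [mul_comm, Complex.ofReal_one, ← hζ]
  push_cast
  congr 1
  · refine tsum_congr fun m => ?_
    rw [Complex.ofReal_cpow (by positivity)]
    push_cast; rfl
  · refine tsum_congr fun d => ?_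
    rcases eq_or_ne d 0 with rfl | hd
    · simp
    rw [LSeries.term_of_ne_zero hd, Complex.ofReal_cpow (Nat.cast_nonneg d)]
    push_cast; rfl

/-- For `x < 0` the real power below is not `0` (`Real.rpow` of a negative base), hence the
assumptions `0 ≤ x` below. -/
def radius (c : ℝ) (n : ℕ) (x : ℝ) : ℤ := ⌊(x / c) ^ (n : ℝ)⁻¹⌋

theorem radius_nonneg {c x : ℝ} (hc : 0 < c) (hx : 0 ≤ x) (n : ℕ) : 0 ≤ radius c n x :=
  Int.floor_nonneg.mpr (by positivity)

theorem abs_le_radius_iff {c x : ℝ} (hc : 0 < c) (hx : 0 ≤ x) {n : ℕ} (hn : n ≠ 0) (m : ℤ) :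
    |m| ≤ radius c n x ↔ |c * (m : ℝ) ^ n| ≤ x := by
  rw [radius, Int.le_floor, Int.cast_abs, Real.le_rpow_inv_iff_of_pos (abs_nonneg _)
    (by positivity) (by positivity), Real.rpow_natCast, le_div_iff₀ hc, abs_mul, abs_pow,
    abs_of_pos hc, mul_comm]

theorem radius_le (c : ℝ) (n : ℕ) (x : ℝ) : (radius c n x : ℝ) ≤ (x / c) ^ (n : ℝ)⁻¹ :=
  Int.floor_le _

theorem sub_one_lt_radius (c : ℝ) (n : ℕ) (x : ℝ) : (x / c) ^ (n : ℝ)⁻¹ - 1 < radius c n x :=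
  Int.sub_one_lt_floor _

theorem tendsto_radius_div_rpow {c : ℝ} (hc : 0 < c) {n : ℕ} (hn : n ≠ 0) :
    Tendsto (fun x => (2 * radius c n x + 1 : ℝ) / x ^ (n : ℝ)⁻¹) atTop
      (𝓝 (2 / c ^ (n : ℝ)⁻¹)) := by
  have he : (0 : ℝ) < (n : ℝ)⁻¹ := by positivity
  have h0 : Tendsto (fun x : ℝ => 1 / x ^ (n : ℝ)⁻¹) atTop (𝓝 0) := by
    simp_rw [one_div]; exact (tendsto_rpow_atTop he).inv_tendsto_atTop
  have hlow := (h0.const_mul (-1)).const_add (2 / c ^ (n : ℝ)⁻¹)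
  have hup := (h0.const_mul 1).const_add (2 / c ^ (n : ℝ)⁻¹)
  rw [mul_zero, add_zero] at hlow hup
  have hsplit : ∀ x : ℝ, 0 < x → (2 * radius c n x + 1 : ℝ) / x ^ (n : ℝ)⁻¹
      = 2 / c ^ (n : ℝ)⁻¹ + (2 * (radius c n x - (x / c) ^ (n : ℝ)⁻¹) + 1) / x ^ (n : ℝ)⁻¹ :=
    fun x hx => by
      have := Real.rpow_pos_of_pos hx (n : ℝ)⁻¹
      have := Real.rpow_pos_of_pos hc (n : ℝ)⁻¹
      rw [Real.div_rpow hx.le hc.le]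
      field_simp
      ring
  refine tendsto_of_tendsto_of_tendsto_of_le_of_le' hlow hup ?_ ?_ <;>
    filter_upwards [eventually_gt_atTop 0] with x hx <;>
    rw [hsplit x hx, mul_one_div] <;> gcongr
  · linarith [sub_one_lt_radius c n x]
  · linarith [radius_le c n x]

theorem two_mul_radius_add_one_le {c x : ℝ} (hc : 1 ≤ c) {n : ℕ} (hn : n ≠ 0)
    (hx : c / 3 ^ n ≤ x) : (2 * radius c n x + 1 : ℝ) ≤ 5 * x ^ (n : ℝ)⁻¹ := by
  have hx0 : 0 ≤ x := le_trans (by positivity) hx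
  have hthird : 1 / 3 ≤ (x / c) ^ (n : ℝ)⁻¹ := by
    rw [Real.le_rpow_inv_iff_of_pos (by norm_num) (by positivity) (by positivity),
      Real.rpow_natCast, le_div_iff₀ (by positivity), div_pow, one_pow, one_div_mul_eq_div]
    exact hx
  have hle : (x / c) ^ (n : ℝ)⁻¹ ≤ x ^ (n : ℝ)⁻¹ :=
    Real.rpow_le_rpow (by positivity) (div_le_self hx0 hc) (by positivity)
  linarith [radius_le c n x]

theorem card_Icc_neg_self {a : ℤ} (ha : 0 ≤ a) : ((Finset.Icc (-a) a).card : ℝ) = 2 * a + 1 := by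
  have : ((Finset.Icc (-a) a).card : ℤ) = 2 * a + 1 := by rw [Int.card_Icc]; omega
  exact_mod_cast this

def height (p : ℤ × ℤ) : ℝ := max |4 * (p.1 : ℝ) ^ 3| |27 * (p.2 : ℝ) ^ 2|

def IsNonsingular (p : ℤ × ℤ) : Prop := 4 * p.1 ^ 3 + 27 * p.2 ^ 2 ≠ 0

instance : DecidablePred IsNonsingular := fun _ => inferInstanceAs (Decidable (_ ≠ _))

def IsMinimal (p : ℤ × ℤ) : Prop := ¬∃ q : ℕ, q.Prime ∧ (q : ℤ) ^ 4 ∣ p.1 ∧ (q : ℤ) ^ 6 ∣ p.2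

theorem four_le_height {p : ℤ × ℤ} (hp : IsNonsingular p) : 4 ≤ height p := by
  by_cases hA : p.1 = 0
  · have hB : p.2 ≠ 0 := fun hB => hp (by simp [hA, hB])
    have : (1 : ℝ) ≤ |(p.2 : ℝ)| := by exact_mod_cast Int.one_le_abs hB
    refine le_max_of_le_right ?_
    rw [abs_mul, abs_pow, abs_of_pos (by norm_num : (0 : ℝ) < 27)]
    nlinarith
  · have : (1 : ℝ) ≤ |(p.1 : ℝ)| := by exact_mod_cast Int.one_le_abs hA
    refine le_max_of_le_left ?_
    rw [abs_mul, abs_pow, abs_of_pos (by norm_num : (0 : ℝ) < 4)]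
    nlinarith [one_le_pow₀ (n := 3) this]

def box (x : ℝ) : Finset (ℤ × ℤ) :=
  Finset.Icc (-radius 4 3 x) (radius 4 3 x) ×ˢ Finset.Icc (-radius 27 2 x) (radius 27 2 x)

def pairsUpTo (x : ℝ) : Finset (ℤ × ℤ) := (box x).filter IsNonsingular

theorem mem_box_iff {x : ℝ} (hx : 0 ≤ x) {p : ℤ × ℤ} : p ∈ box x ↔ height p ≤ x := by
  rw [box, Finset.mem_product, Finset.mem_Icc, Finset.mem_Icc, ← abs_le, ← abs_le,
    abs_le_radius_iff (by norm_num) hx (by norm_num),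
    abs_le_radius_iff (by norm_num) hx (by norm_num),
    height, max_le_iff]

theorem mem_pairsUpTo_iff {x : ℝ} (hx : 0 ≤ x) {p : ℤ × ℤ} :
    p ∈ pairsUpTo x ↔ IsNonsingular p ∧ height p ≤ x := by
  rw [pairsUpTo, Finset.mem_filter, mem_box_iff hx, and_comm]

theorem pairsUpTo_eq_empty {x : ℝ} (hx0 : 0 ≤ x) (hx : x < 4) : pairsUpTo x = ∅ :=
  Finset.eq_empty_of_forall_notMem fun _ hp =>
    have ⟨hp, hpx⟩ := (mem_pairsUpTo_iff hx0).mp hp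
    (four_le_height hp).not_gt (hpx.trans_lt hx)

theorem card_box {x : ℝ} (hx : 0 ≤ x) :
    ((box x).card : ℝ) = (2 * radius 4 3 x + 1) * (2 * radius 27 2 x + 1) := by
  rw [box, Finset.card_product, Nat.cast_mul, card_Icc_neg_self (radius_nonneg (by norm_num) hx _),
    card_Icc_neg_self (radius_nonneg (by norm_num) hx _)]

/-- On a singular pair, `4A³ = -27B²` determines `A` from `B`. -/
theorem card_filter_not_isNonsingular_le {x : ℝ} (hx : 0 ≤ x) :
    (((box x).filter (¬ IsNonsingular ·)).card : ℝ) ≤ 2 * radius 27 2 x + 1 := by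
  rw [← card_Icc_neg_self (radius_nonneg (by norm_num) hx _), Nat.cast_le]
  refine Finset.card_le_card_of_injOn Prod.snd (fun p hp => ?_) fun p hp q hq hpq => ?_
  · exact (Finset.mem_product.mp (Finset.mem_filter.mp hp).1).2
  · simp only [Finset.coe_filter, Set.mem_ofPred_eq, IsNonsingular, not_not] at hp hq
    have hcube : p.1 ^ 3 = q.1 ^ 3 := by rw [hpq] at hp; linarith [hp.2, hq.2]
    exact Prod.ext ((Odd.strictMono_pow (by decide)).injective hcube) hpq

theorem card_pairsUpTo_le {x : ℝ} (hx : 0 ≤ x) :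
    ((pairsUpTo x).card : ℝ) ≤ (2 * radius 4 3 x + 1) * (2 * radius 27 2 x + 1) := by
  rw [← card_box hx]
  exact_mod_cast Finset.card_filter_le _ _

theorem le_card_pairsUpTo {x : ℝ} (hx : 0 ≤ x) :
    (2 * radius 4 3 x + 1) * (2 * radius 27 2 x + 1) - (2 * radius 27 2 x + 1)
      ≤ ((pairsUpTo x).card : ℝ) := by
  have hsplit := Finset.card_filter_add_card_filter_not (s := box x) IsNonsingular
  rw [← card_box hx, ← hsplit, Nat.cast_add, pairsUpTo]
  linarith [card_filter_not_isNonsingular_le hx]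

theorem rpow_five_sixths {x : ℝ} (hx : 0 < x) :
    x ^ ((3 : ℕ) : ℝ)⁻¹ * x ^ ((2 : ℕ) : ℝ)⁻¹ = x ^ ((5 : ℝ) / 6) := by
  rw [← Real.rpow_add hx]; norm_num

theorem tendsto_card_pairsUpTo_div_rpow :
    Tendsto (fun x => ((pairsUpTo x).card : ℝ) / x ^ ((5 : ℝ) / 6)) atTop
      (𝓝 ((2 : ℝ) ^ ((4 : ℝ) / 3) * (3 : ℝ) ^ (-(3 : ℝ) / 2))) := by
  have hA := tendsto_radius_div_rpow (c := 4) (n := 3) (by norm_num) (by norm_num)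
  have hB := tendsto_radius_div_rpow (c := 27) (n := 2) (by norm_num) (by norm_num)
  have h0 : Tendsto (fun x : ℝ => 1 / x ^ ((3 : ℕ) : ℝ)⁻¹) atTop (𝓝 0) := by
    simp_rw [one_div]; exact (tendsto_rpow_atTop (by norm_num)).inv_tendsto_atTop
  have hlow := (hA.mul hB).sub (hB.mul h0)
  rw [mul_zero, sub_zero] at hlow
  have hκ : (2 : ℝ) / 4 ^ ((3 : ℕ) : ℝ)⁻¹ * (2 / 27 ^ ((2 : ℕ) : ℝ)⁻¹)
      = (2 : ℝ) ^ ((4 : ℝ) / 3) * (3 : ℝ) ^ (-(3 : ℝ) / 2) := by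
    rw [show (4 : ℝ) / 3 = 2 - 2 * 3⁻¹ by norm_num, show -(3 : ℝ) / 2 = -(3 * 2⁻¹) by norm_num,
      show (4 : ℝ) = 2 ^ (2 : ℝ) by norm_num, show (27 : ℝ) = 3 ^ (3 : ℝ) by norm_num,
      Nat.cast_ofNat, Nat.cast_ofNat, ← Real.rpow_mul (by norm_num), ← Real.rpow_mul (by norm_num),
      Real.rpow_sub two_pos, Real.rpow_neg (by norm_num)]
    norm_num
    ring
  rw [← hκ]
  refine tendsto_of_tendsto_of_tendsto_of_le_of_le' hlow (hA.mul hB) ?_ ?_ <;>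
    filter_upwards [eventually_gt_atTop 0] with x hx <;>
    rw [← rpow_five_sixths hx]
  · calc _ = ((2 * radius 4 3 x + 1) * (2 * radius 27 2 x + 1) - (2 * radius 27 2 x + 1) : ℝ) /
          (x ^ ((3 : ℕ) : ℝ)⁻¹ * x ^ ((2 : ℕ) : ℝ)⁻¹) := by ring
      _ ≤ _ := by gcongr; exact le_card_pairsUpTo hx.le
  · rw [div_mul_div_comm]
    gcongr
    exact card_pairsUpTo_le hx.le

theorem card_pairsUpTo_le_rpow {x : ℝ} (hx : 0 ≤ x) :
    ((pairsUpTo x).card : ℝ) ≤ 25 * x ^ ((5 : ℝ) / 6) := by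
  rcases lt_or_ge x 4 with hx4 | hx4
  · rw [pairsUpTo_eq_empty hx hx4, Finset.card_empty, Nat.cast_zero]
    positivity
  calc ((pairsUpTo x).card : ℝ) ≤ (2 * radius 4 3 x + 1) * (2 * radius 27 2 x + 1) :=
        card_pairsUpTo_le hx
    _ ≤ (5 * x ^ ((3 : ℕ) : ℝ)⁻¹) * (5 * x ^ ((2 : ℕ) : ℝ)⁻¹) := by
        gcongr
        · have : (0 : ℝ) ≤ radius 27 2 x := by exact_mod_cast radius_nonneg (by norm_num) hx 2
          linarith
        · exact two_mul_radius_add_one_le (by norm_num) (by norm_num) (by linarith)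
        · exact two_mul_radius_add_one_le (by norm_num) (by norm_num) (by linarith)
    _ = 25 * x ^ ((5 : ℝ) / 6) := by
        rw [← rpow_five_sixths (by linarith)]; ring

def IsWeightedDivisor (d : ℕ) (p : ℤ × ℤ) : Prop := (d : ℤ) ^ 4 ∣ p.1 ∧ (d : ℤ) ^ 6 ∣ p.2

instance (d : ℕ) (p : ℤ × ℤ) : Decidable (IsWeightedDivisor d p) :=
  inferInstanceAs (Decidable (_ ∧ _))

def scale (d : ℕ) (p : ℤ × ℤ) : ℤ × ℤ := ((d : ℤ) ^ 4 * p.1, (d : ℤ) ^ 6 * p.2)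

theorem isWeightedDivisor_iff_exists_scale {d : ℕ} {p : ℤ × ℤ} :
    IsWeightedDivisor d p ↔ ∃ q, scale d q = p := by
  constructor
  · rintro ⟨⟨a, ha⟩, ⟨b, hb⟩⟩
    exact ⟨(a, b), Prod.ext ha.symm hb.symm⟩
  · rintro ⟨q, rfl⟩
    exact ⟨dvd_mul_right _ _, dvd_mul_right _ _⟩

theorem scale_injective {d : ℕ} (hd : d ≠ 0) : Function.Injective (scale d) := by
  intro p q h
  simp only [scale, Prod.mk.injEq] at h
  exact Prod.ext (mul_left_cancel₀ (by positivity) h.1) (mul_left_cancel₀ (by positivity) h.2)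

theorem height_scale (d : ℕ) (p : ℤ × ℤ) : height (scale d p) = (d : ℝ) ^ 12 * height p := by
  simp only [height, scale, Int.cast_mul, Int.cast_pow, Int.cast_natCast]
  have hd12 : (0 : ℝ) ≤ (d : ℝ) ^ 12 := by positivity
  rw [mul_max_of_nonneg _ _ hd12, ← abs_of_nonneg hd12, ← abs_mul, ← abs_mul]
  ring_nf

theorem isNonsingular_scale_iff {d : ℕ} (hd : d ≠ 0) {p : ℤ × ℤ} :
    IsNonsingular (scale d p) ↔ IsNonsingular p := by
  have : 4 * ((d : ℤ) ^ 4 * p.1) ^ 3 + 27 * ((d : ℤ) ^ 6 * p.2) ^ 2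
      = (d : ℤ) ^ 12 * (4 * p.1 ^ 3 + 27 * p.2 ^ 2) := by ring
  simp only [IsNonsingular, scale, this, mul_ne_zero_iff, pow_ne_zero_iff, ne_eq, Nat.cast_eq_zero,
    hd, not_false_eq_true, true_and, OfNat.ofNat_ne_zero]

theorem IsWeightedDivisor.le_height {d : ℕ} {p : ℤ × ℤ} (hd : IsWeightedDivisor d p)
    (hp : IsNonsingular p) : (d : ℝ) ≤ height p := by
  rcases eq_or_ne d 0 with rfl | hd0
  · simpa using (zero_le_four.trans (four_le_height hp))
  obtain ⟨q, rfl⟩ := isWeightedDivisor_iff_exists_scale.mp hd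
  have hq := four_le_height ((isNonsingular_scale_iff hd0).mp hp)
  have hd1 : (1 : ℝ) ≤ d := by exact_mod_cast Nat.one_le_iff_ne_zero.mpr hd0
  rw [height_scale]
  calc (d : ℝ) ≤ (d : ℝ) ^ 12 := le_self_pow₀ hd1 (by norm_num)
    _ ≤ (d : ℝ) ^ 12 * height q := le_mul_of_one_le_right (by positivity) (by linarith)

theorem IsWeightedDivisor.of_dvd {d e : ℕ} {p : ℤ × ℤ} (hde : d ∣ e)
    (he : IsWeightedDivisor e p) : IsWeightedDivisor d p :=
  ⟨(pow_dvd_pow_of_dvd (Int.natCast_dvd_natCast.mpr hde) 4).trans he.1,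
    (pow_dvd_pow_of_dvd (Int.natCast_dvd_natCast.mpr hde) 6).trans he.2⟩

theorem natCast_lcm_pow_dvd {d e n : ℕ} {a : ℤ} (hd : (d : ℤ) ^ n ∣ a) (he : (e : ℤ) ^ n ∣ a) :
    (Nat.lcm d e : ℤ) ^ n ∣ a := by
  rw [← Nat.cast_pow, Int.natCast_dvd, ← Nat.pow_lcm_pow] at *
  exact Nat.lcm_dvd hd he

theorem IsWeightedDivisor.lcm {d e : ℕ} {p : ℤ × ℤ} (hd : IsWeightedDivisor d p)
    (he : IsWeightedDivisor e p) : IsWeightedDivisor (Nat.lcm d e) p :=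
  ⟨natCast_lcm_pow_dvd hd.1 he.1, natCast_lcm_pow_dvd hd.2 he.2⟩

theorem IsWeightedDivisor.ne_zero {d : ℕ} {p : ℤ × ℤ} (hd : IsWeightedDivisor d p)
    (hp : IsNonsingular p) : d ≠ 0 := by
  rintro rfl
  obtain ⟨h1, h2⟩ := hd
  simp only [Nat.cast_zero, ne_eq, OfNat.ofNat_ne_zero, not_false_eq_true, zero_pow,
    zero_dvd_iff] at h1 h2
  exact hp (by simp [h1, h2])

def maxWeightedDivisor (p : ℤ × ℤ) : ℕ := Nat.findGreatest (IsWeightedDivisor · p) ⌊height p⌋₊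

theorem dvd_maxWeightedDivisor_iff {p : ℤ × ℤ} (hp : IsNonsingular p) {d : ℕ} :
    d ∣ maxWeightedDivisor p ↔ IsWeightedDivisor d p :=
  dvd_findGreatest_iff ⟨by simp, by simp⟩ (fun _ hd => Nat.le_floor (hd.le_height hp))
    IsWeightedDivisor.of_dvd IsWeightedDivisor.lcm

theorem isMinimal_iff_maxWeightedDivisor_eq_one {p : ℤ × ℤ} (hp : IsNonsingular p) :
    IsMinimal p ↔ maxWeightedDivisor p = 1 := by
  simp only [IsMinimal, Nat.eq_one_iff_not_exists_prime_dvd, dvd_maxWeightedDivisor_iff hp,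
    IsWeightedDivisor, not_exists, not_and]

open Classical in
theorem sum_moebius_filter_isWeightedDivisor {p : ℤ × ℤ} (hp : IsNonsingular p) {x : ℝ}
    (hx : height p ≤ x) :
    ∑ d ∈ (Finset.Icc 1 ⌊x⌋₊).filter (IsWeightedDivisor · p), μ d =
      if IsMinimal p then 1 else 0 := by
  have hdivisors : (Finset.Icc 1 ⌊x⌋₊).filter (IsWeightedDivisor · p) =
      (maxWeightedDivisor p).divisors := by
    ext d
    have hg := (dvd_maxWeightedDivisor_iff hp).mp dvd_rfl
    rw [Finset.mem_filter, Finset.mem_Icc, Nat.mem_divisors, dvd_maxWeightedDivisor_iff hp]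
    refine ⟨fun ⟨_, hd⟩ => ⟨hd, hg.ne_zero hp⟩, fun ⟨hd, _⟩ => ⟨⟨?_, ?_⟩, hd⟩⟩
    · exact Nat.one_le_iff_ne_zero.mpr (hd.ne_zero hp)
    · exact Nat.le_floor ((hd.le_height hp).trans hx)
  rw [hdivisors, sum_divisors_moebius]
  exact if_congr (isMinimal_iff_maxWeightedDivisor_eq_one hp).symm rfl rfl

theorem card_filter_isWeightedDivisor {x : ℝ} (hx : 0 ≤ x) {d : ℕ} (hd : d ≠ 0) :
    ((pairsUpTo x).filter (IsWeightedDivisor d)).card = (pairsUpTo (x / (d : ℝ) ^ 12)).card := by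
  classical
  have hd12 : (0 : ℝ) < (d : ℝ) ^ 12 := by positivity
  have himage : (pairsUpTo x).filter (IsWeightedDivisor d) =
      (pairsUpTo (x / (d : ℝ) ^ 12)).image (scale d) := by
    ext p
    simp only [Finset.mem_filter, Finset.mem_image, mem_pairsUpTo_iff hx,
      mem_pairsUpTo_iff (div_nonneg hx hd12.le), isWeightedDivisor_iff_exists_scale]
    constructor
    · rintro ⟨⟨hp, hpx⟩, q, rfl⟩
      refine ⟨q, ⟨(isNonsingular_scale_iff hd).mp hp, ?_⟩, rfl⟩
      rwa [le_div_iff₀ hd12, mul_comm, ← height_scale]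
    · rintro ⟨q, ⟨hq, hqx⟩, rfl⟩
      refine ⟨⟨(isNonsingular_scale_iff hd).mpr hq, ?_⟩, q, rfl⟩
      rwa [height_scale, mul_comm, ← le_div_iff₀ hd12]
  rw [himage, Finset.card_image_of_injective _ (scale_injective hd)]

open Classical in
theorem card_filter_isMinimal_eq_sum {x : ℝ} (hx : 0 ≤ x) :
    (((pairsUpTo x).filter IsMinimal).card : ℤ) =
      ∑ d ∈ Finset.Icc 1 ⌊x⌋₊, μ d * (pairsUpTo (x / (d : ℝ) ^ 12)).card := by
  calc (((pairsUpTo x).filter IsMinimal).card : ℤ)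
      = ∑ p ∈ pairsUpTo x, if IsMinimal p then 1 else 0 := by
        rw [Finset.sum_boole, Nat.cast_inj]
    _ = ∑ p ∈ pairsUpTo x, ∑ d ∈ Finset.Icc 1 ⌊x⌋₊, if IsWeightedDivisor d p then μ d else 0 := by
        refine Finset.sum_congr rfl fun p hp => ?_
        obtain ⟨hns, hpx⟩ := (mem_pairsUpTo_iff hx).mp hp
        rw [← Finset.sum_filter, sum_moebius_filter_isWeightedDivisor hns hpx]
    _ = ∑ d ∈ Finset.Icc 1 ⌊x⌋₊, μ d * ((pairsUpTo x).filter (IsWeightedDivisor d)).card := by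
        rw [Finset.sum_comm]
        refine Finset.sum_congr rfl fun d _ => ?_
        rw [← Finset.sum_filter, Finset.sum_const, nsmul_eq_mul, mul_comm]
    _ = _ := by
        refine Finset.sum_congr rfl fun d hd => ?_
        rw [card_filter_isWeightedDivisor hx (by simp at hd; omega)]

open Classical in
theorem card_filter_isMinimal_div_eq_tsum {x : ℝ} (hx : 0 < x) (s : ℝ) :
    (((pairsUpTo x).filter IsMinimal).card : ℝ) / x ^ s =
      ∑' d : ℕ, μ d * ((pairsUpTo (x / (d : ℝ) ^ 12)).card : ℝ) / x ^ s := by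
  rw [tsum_eq_sum (s := Finset.Icc 1 ⌊x⌋₊) fun d hd => ?_, ← Finset.sum_div]
  · exact_mod_cast congrArg (fun n : ℤ => (n : ℝ) / x ^ s) (card_filter_isMinimal_eq_sum hx.le)
  rcases eq_or_ne d 0 with rfl | hd0
  · simp
  have hxd : x < d := Nat.lt_of_floor_lt (by simp at hd; omega)
  have hd1 : (1 : ℝ) ≤ d := by exact_mod_cast Nat.one_le_iff_ne_zero.mpr hd0
  have hsmall : x / (d : ℝ) ^ 12 < 4 := by
    rw [div_lt_iff₀ (by positivity)]
    nlinarith [le_self_pow₀ hd1 (show 12 ≠ 0 by norm_num)]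
  rw [pairsUpTo_eq_empty (by positivity) hsmall, Finset.card_empty, Nat.cast_zero, mul_zero,
    zero_div]

open Classical in
theorem ncard_eq_card_filter_isMinimal {x : ℝ} (hx : 0 ≤ x) :
    {p | IsNonsingular p ∧ IsMinimal p ∧ height p ≤ x}.ncard =
      ((pairsUpTo x).filter IsMinimal).card := by
  rw [← Set.ncard_coe_finset]
  congr 1
  ext p
  simp only [Finset.coe_filter, mem_pairsUpTo_iff hx, Set.mem_ofPred_eq]
  tauto

end

end WeierstrassCount

open Filter

open WeierstrassCount in
/-- the number of minimal Weierstrass equations `y² = x³ + Ax + B`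
(with `A,B ∈ ℤ`, `4A³+27B² ≠ 0`, no prime `p` with `p⁴ ∣ A` and `p⁶ ∣ B`) of
height `max(|4A³|,|27B²|) ≤ H` is asymptotic to `κ H^{5/6}` with
`κ = 2^{4/3} 3^{-3/2} / ζ(10)`. -/
theorem count_elliptic_curves_asymptotic :
    Tendsto
      (fun H : ℝ =>
        (Set.ncard {p : ℤ × ℤ |
            4 * p.1 ^ 3 + 27 * p.2 ^ 2 ≠ 0 ∧
            (¬∃ q : ℕ, q.Prime ∧ (q : ℤ) ^ 4 ∣ p.1 ∧ (q : ℤ) ^ 6 ∣ p.2) ∧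
            max |4 * (p.1 : ℝ) ^ 3| |27 * (p.2 : ℝ) ^ 2| ≤ H} : ℝ) /
          H ^ ((5 : ℝ) / 6))
      atTop
      (nhds ((2 : ℝ) ^ ((4 : ℝ) / 3) * (3 : ℝ) ^ (-(3 : ℝ) / 2) /
        ∑' m : ℕ, (1 : ℝ) / ((m : ℝ) + 1) ^ 10)) := by
  have hζ : ∑' d : ℕ, (μ d : ℝ) / (d : ℝ) ^ (((12 : ℕ) : ℝ) * (5 / 6)) =
      1 / ∑' m : ℕ, (1 : ℝ) / ((m : ℝ) + 1) ^ 10 := by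
    have h := tsum_moebius_div_rpow_mul_tsum_one_div_rpow (s := 10) (by norm_num)
    rw [show ((12 : ℕ) : ℝ) * (5 / 6) = 10 by norm_num]
    simp only [Real.rpow_ofNat] at h ⊢
    exact eq_one_div_of_mul_eq_one_left h
  have hlim := tendsto_tsum_moebius_mul_div_rpow (k := 12) tendsto_card_pairsUpTo_div_rpow
    (fun y hy => by rw [Nat.abs_cast]; exact card_pairsUpTo_le_rpow hy) (by norm_num)
  rw [hζ, mul_one_div] at hlim
  refine hlim.congr' ?_
  filter_upwards [eventually_gt_atTop 0] with H hH
  rw [← card_filter_isMinimal_div_eq_tsum hH, ← ncard_eq_card_filter_isMinimal hH.le]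
  rfl
end

section
/- Let (B_i)_{i≥1} be a sequence of independent events with probabilities p_i such that ∑ p_i diverges. Then with probability 1, #{i ≤ m : B_i occurs} = (1 + o(1)) ∑_{i=1}^m p_i as m → ∞. -/
/-!
Write `S m` for the number of events among the first `m` that occur and `a m = ∑_{i<m} p i`.
By pairwise independence `Var (S m) = ∑_{i<m} p i (1 - p i) ≤ a m`. Let `n k` be the first index
with `k² ≤ a (n k)`; since `a` has increments at most `1`, also `a (n k) < k² + 1`. Chebyshev gives
`P (|S (n k) - a (n k)| ≥ ε a (n k)) ≤ 1 / (ε² k²)`, which is summable, so by Borel–Cantelli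
`S (n k) / a (n k) → 1` almost surely. As `a (n (k + 1)) / a (n k) → 1` and both `S` and `a` are
monotone, squeezing `m` between consecutive `n k` gives `S m / a m → 1`.
-/

open Filter MeasureTheory Topology ProbabilityTheory Finset

theorem tendsto_div_of_tendsto_div_subseq {S a : ℕ → ℝ} {n κ : ℕ → ℕ}
    (hS₀ : ∀ m, 0 ≤ S m) (hS : Monotone S) (ha : Monotone a)
    (hpos : ∀ᶠ k in atTop, 0 < a (n k))
    (hsub : Tendsto (fun k => S (n k) / a (n k)) atTop (𝓝 1))
    (hratio : Tendsto (fun k => a (n (k + 1)) / a (n k)) atTop (𝓝 1))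
    (hκ : Tendsto κ atTop atTop) (hκn : ∀ m, n (κ m) ≤ m ∧ m ≤ n (κ m + 1)) :
    Tendsto (fun m => S m / a m) atTop (𝓝 1) := by
  have hpos' : ∀ᶠ k in atTop, 0 < a (n k) ∧ 0 < a (n (k + 1)) :=
    hpos.and ((tendsto_add_atTop_nat 1).eventually hpos)
  have hlower : Tendsto (fun k => S (n k) / a (n (k + 1))) atTop (𝓝 1) := by
    have h := hsub.div hratio one_ne_zero
    rw [div_one] at h
    refine h.congr' ?_
    filter_upwards [hpos] with k hk
    simp only [Pi.div_apply]
    field_simp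
  have hupper : Tendsto (fun k => S (n (k + 1)) / a (n k)) atTop (𝓝 1) := by
    have h := (hsub.comp (tendsto_add_atTop_nat 1)).mul hratio
    rw [one_mul] at h
    refine h.congr' ?_
    filter_upwards [hpos'] with k hk
    simp only [Function.comp_apply]
    field_simp [hk.2.ne']
  refine tendsto_of_tendsto_of_tendsto_of_le_of_le' (hlower.comp hκ) (hupper.comp hκ) ?_ ?_
    <;> filter_upwards [hκ.eventually hpos] with m hm
  · have ham : 0 < a m := hm.trans_le (ha (hκn m).1)
    exact div_le_div₀ (hS₀ m) (hS (hκn m).1) ham (ha (hκn m).2)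
  · exact div_le_div₀ (hS₀ _) (hS (hκn m).2) hm (ha (hκn m).1)

/-- The junk value is `0` when `a` never reaches `x`. -/
noncomputable def hitIndex (a : ℕ → ℝ) (x : ℝ) : ℕ := sInf {m | x ≤ a m}

section hitIndex

variable {a : ℕ → ℝ} {x : ℝ}

theorem le_apply_hitIndex (hx : ∃ m, x ≤ a m) : x ≤ a (hitIndex a x) :=
  Nat.sInf_mem hx

theorem hitIndex_le_iff (ha : Monotone a) (hx : ∃ m, x ≤ a m) {m : ℕ} :
    hitIndex a x ≤ m ↔ x ≤ a m :=
  ⟨fun h => (le_apply_hitIndex hx).trans (ha h), fun h => Nat.sInf_le h⟩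

theorem apply_hitIndex_lt (hstep : ∀ m, a (m + 1) ≤ a m + 1) (h₀ : a 0 ≤ x) :
    a (hitIndex a x) < x + 1 := by
  rcases h : hitIndex a x with _ | j
  · linarith
  · have hj : a j < x := not_le.1 (Nat.notMem_of_lt_sInf (show j < hitIndex a x by omega))
    linarith [hstep j]

end hitIndex

theorem tendsto_div_of_tendsto_div_hitIndex_sq {S a : ℕ → ℝ}
    (hS₀ : ∀ m, 0 ≤ S m) (hS : Monotone S) (ha : Monotone a) (ha₀ : a 0 = 0)
    (hstep : ∀ m, a (m + 1) ≤ a m + 1) (htop : Tendsto a atTop atTop)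
    (hsub : Tendsto (fun k : ℕ => S (hitIndex a ((k : ℝ) ^ 2)) / a (hitIndex a ((k : ℝ) ^ 2)))
      atTop (𝓝 1)) :
    Tendsto (fun m => S m / a m) atTop (𝓝 1) := by
  set n : ℕ → ℕ := fun k => hitIndex a ((k : ℝ) ^ 2)
  have hex : ∀ k : ℕ, ∃ m, (k : ℝ) ^ 2 ≤ a m := fun k => (htop.eventually_ge_atTop _).exists
  have hn_lower : ∀ k : ℕ, (k : ℝ) ^ 2 ≤ a (n k) := fun k => le_apply_hitIndex (hex k)
  have hn_upper : ∀ k : ℕ, a (n k) < (k : ℝ) ^ 2 + 1 := fun k =>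
    apply_hitIndex_lt hstep (ha₀ ▸ by positivity)
  have hpos : ∀ᶠ k in atTop, 0 < a (n k) := by
    filter_upwards [eventually_ge_atTop 1] with k hk
    exact lt_of_lt_of_le (by positivity) (hn_lower k)
  have hratio : Tendsto (fun k => a (n (k + 1)) / a (n k)) atTop (𝓝 1) := by
    have hinv := tendsto_one_div_atTop_nhds_zero_nat (𝕜 := ℝ)
    have hbound : Tendsto (fun k : ℕ => (1 + 1 / (k : ℝ)) ^ 2 + (1 / (k : ℝ)) ^ 2) atTop (𝓝 1) := by
      simpa using ((hinv.const_add 1).pow 2).add (hinv.pow 2)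
    refine tendsto_of_tendsto_of_tendsto_of_le_of_le' tendsto_const_nhds hbound ?_ ?_
      <;> filter_upwards [hpos, eventually_ne_atTop 0] with k hk hk₀
    · rw [one_le_div hk]
      exact ha ((hitIndex_le_iff ha (hex k)).2 (le_trans (by gcongr; simp) (hn_lower (k + 1))))
    · rw [div_le_iff₀ hk]
      calc a (n (k + 1)) ≤ ((k : ℝ) + 1) ^ 2 + 1 := by exact_mod_cast (hn_upper (k + 1)).le
        _ = ((1 + 1 / (k : ℝ)) ^ 2 + (1 / (k : ℝ)) ^ 2) * (k : ℝ) ^ 2 := by field_simp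
        _ ≤ _ := by gcongr; exact hn_lower k
  set κ : ℕ → ℕ := fun m => ⌊√(a m)⌋₊
  have hκ : Tendsto κ atTop atTop :=
    (tendsto_nat_floor_atTop.comp Real.tendsto_sqrt_atTop).comp htop
  refine tendsto_div_of_tendsto_div_subseq hS₀ hS ha hpos hsub hratio hκ fun m => ⟨?_, ?_⟩
  · refine (hitIndex_le_iff ha (hex _)).2 ?_
    calc ((κ m : ℕ) : ℝ) ^ 2 ≤ √(a m) ^ 2 := by gcongr; exact Nat.floor_le (Real.sqrt_nonneg _)
      _ = a m := Real.sq_sqrt (ha₀ ▸ ha (Nat.zero_le m))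
  · refine le_of_lt (not_le.1 fun h => ?_)
    have h' := (hitIndex_le_iff ha (hex _)).1 h
    have := Real.lt_sq_of_sqrt_lt (Nat.lt_floor_add_one (√(a m)))
    push_cast at h'
    linarith

section Probability

variable {Ω : Type*} [MeasurableSpace Ω] {μ : Measure Ω}

theorem ae_tendsto_div_integral_of_summable [IsFiniteMeasure μ] {Y : ℕ → Ω → ℝ}
    (hY : ∀ k, MemLp (Y k) 2 μ) (hmean : ∀ k, μ[Y k] ≠ 0)
    (hsum : Summable fun k => Var[Y k; μ] / μ[Y k] ^ 2) :
    ∀ᵐ ω ∂μ, Tendsto (fun k => Y k ω / μ[Y k]) atTop (𝓝 1) := by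
  have heventually : ∀ ε > 0, ∀ᵐ ω ∂μ, ∀ᶠ k in atTop, |Y k ω / μ[Y k] - 1| < ε := by
    intro ε hε
    set E : ℕ → Set Ω := fun k => {ω | ε * |μ[Y k]| ≤ |Y k ω - μ[Y k]|}
    have hchebyshev : ∀ k, μ (E k) ≤ ENNReal.ofReal ((ε ^ 2)⁻¹ * (Var[Y k; μ] / μ[Y k] ^ 2)) :=
      fun k => (meas_ge_le_variance_div_sq (hY k)
        (mul_pos hε (abs_pos.2 (hmean k)))).trans_eq (by rw [mul_pow, sq_abs]; field_simp)
    have hfinite : ∑' k, μ (E k) ≠ ⊤ := by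
      refine ne_top_of_le_ne_top ?_ (ENNReal.tsum_le_tsum hchebyshev)
      rw [← ENNReal.ofReal_tsum_of_nonneg (fun k => mul_nonneg (by positivity)
        (div_nonneg (variance_nonneg _ _) (sq_nonneg _))) (hsum.mul_left _)]
      exact ENNReal.ofReal_ne_top
    filter_upwards [ae_eventually_notMem hfinite] with ω hω
    filter_upwards [hω] with k hk
    rw [div_sub_one (hmean k), abs_div, div_lt_iff₀ (abs_pos.2 (hmean k))]
    simpa [E] using hk
  filter_upwards [ae_all_iff.2 fun j : ℕ => heventually (1 / (j + 1)) (by positivity)] with ω hω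
  refine Metric.tendsto_nhds.2 fun ε hε => ?_
  obtain ⟨j, hj⟩ := exists_nat_one_div_lt hε
  exact (hω j).mono fun k hk => hk.trans hj

theorem variance_le_integral_of_nonneg_of_le_one [IsProbabilityMeasure μ] {X : Ω → ℝ}
    (hX : MemLp X 2 μ) (h₀ : ∀ ω, 0 ≤ X ω) (h₁ : ∀ ω, X ω ≤ 1) :
    Var[X; μ] ≤ μ[X] := by
  refine (variance_le_expectation_sq hX.1).trans
    (integral_mono hX.integrable_sq (hX.integrable one_le_two) fun ω => ?_)
  simp only [Pi.pow_apply]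
  nlinarith [h₀ ω, h₁ ω]

theorem ae_tendsto_sum_div_sum_integral [IsProbabilityMeasure μ] {X : ℕ → Ω → ℝ}
    (hX : ∀ i, AEStronglyMeasurable (X i) μ) (h₀ : ∀ i ω, 0 ≤ X i ω) (h₁ : ∀ i ω, X i ω ≤ 1)
    (hind : Pairwise fun i j => IndepFun (X i) (X j) μ) (hdiv : ¬Summable fun i => μ[X i]) :
    ∀ᵐ ω ∂μ, Tendsto (fun m => (∑ i ∈ range m, X i ω) / ∑ i ∈ range m, μ[X i]) atTop (𝓝 1) := by
  set a : ℕ → ℝ := fun m => ∑ i ∈ range m, μ[X i]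
  set S : ℕ → Ω → ℝ := fun m ω => ∑ i ∈ range m, X i ω
  have hS : ∀ m, S m = ∑ i ∈ range m, X i := fun m => (Finset.sum_fn _ _).symm
  have hX₂ : ∀ i, MemLp (X i) 2 μ := fun i => MemLp.of_bound (hX i) 1 (ae_of_all _ fun ω => by
    rw [Real.norm_eq_abs, abs_le]; constructor <;> linarith [h₀ i ω, h₁ i ω])
  have hmean : ∀ m, μ[S m] = a m := fun m =>
    integral_finsetSum _ fun i _ => (hX₂ i).integrable one_le_two
  have hvar : ∀ m, Var[S m; μ] ≤ a m := fun m => by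
    rw [hS, IndepFun.variance_sum (fun i _ => hX₂ i) fun i _ j _ hij => hind hij]
    exact sum_le_sum fun i _ => variance_le_integral_of_nonneg_of_le_one (hX₂ i) (h₀ i) (h₁ i)
  have ha : Monotone a := monotone_nat_of_le_succ fun m => by
    simpa [a, sum_range_succ] using integral_nonneg (h₀ m)
  have hstep : ∀ m, a (m + 1) ≤ a m + 1 := fun m => by
    simpa [a, sum_range_succ] using
      integral_mono ((hX₂ m).integrable one_le_two) (integrable_const 1) (h₁ m)
  have htop : Tendsto a atTop atTop :=
    (not_summable_iff_tendsto_nat_atTop_of_nonneg fun i => integral_nonneg (h₀ i)).1 hdiv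
  set n : ℕ → ℕ := fun k => hitIndex a ((k : ℝ) ^ 2)
  have hn : ∀ k : ℕ, (k : ℝ) ^ 2 ≤ a (n k) := fun k =>
    le_apply_hitIndex (htop.eventually_ge_atTop _).exists
  -- Shifted by one since `a (n 0) = a 0 = 0`.
  have hpos : ∀ k : ℕ, 0 < a (n (k + 1)) := fun k => lt_of_lt_of_le (by positivity) (hn (k + 1))
  have hsum : Summable fun k => Var[S (n (k + 1)); μ] / μ[S (n (k + 1))] ^ 2 := by
    refine Summable.of_nonneg_of_le (fun k => div_nonneg (variance_nonneg _ _) (sq_nonneg _))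
      (fun k => ?_) ((summable_nat_add_iff 1).2 (Real.summable_one_div_nat_pow.2 one_lt_two))
    rw [hmean]
    calc Var[S (n (k + 1)); μ] / a (n (k + 1)) ^ 2 ≤ a (n (k + 1)) / a (n (k + 1)) ^ 2 := by
          gcongr; exact hvar _
      _ = 1 / a (n (k + 1)) := by field_simp
      _ ≤ 1 / ((k + 1 : ℕ) : ℝ) ^ 2 := one_div_le_one_div_of_le (by positivity) (hn (k + 1))
  have hsub : ∀ᵐ ω ∂μ, Tendsto (fun k => S (n (k + 1)) ω / a (n (k + 1))) atTop (𝓝 1) := by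
    have h := ae_tendsto_div_integral_of_summable (Y := fun k => S (n (k + 1)))
      (fun k => hS _ ▸ memLp_finsetSum' _ fun i _ => hX₂ i)
      (fun k => (hmean _).trans_ne (hpos k).ne') hsum
    simpa only [hmean] using h
  filter_upwards [hsub] with ω hω
  exact tendsto_div_of_tendsto_div_hitIndex_sq (fun m => sum_nonneg fun i _ => h₀ i ω)
    (monotone_nat_of_le_succ fun m => by simpa [S, sum_range_succ] using h₀ m ω) ha
    (sum_range_zero _) hstep htop ((tendsto_add_atTop_iff_nat 1).1 hω)

end Probability

theorem ncard_setOf_lt_and_mem_eq_sum_indicator {Ω : Type*} (B : ℕ → Set Ω) (ω : Ω) (m : ℕ) :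
    ({i | i < m ∧ ω ∈ B i}.ncard : ℝ) = ∑ i ∈ range m, (B i).indicator 1 ω := by
  classical
  have hset : {i | i < m ∧ ω ∈ B i} = ↑((range m).filter fun i => ω ∈ B i) := by
    ext i; simp
  rw [hset, Set.ncard_coe_finset, Finset.card_filter]
  push_cast
  simp [Set.indicator_apply]

/-- if `(B_i)` are independent events with probabilities `p_i` and
`∑ p_i` diverges, then almost surely
`#{i ≤ m : B_i occurs} = (1+o(1)) ∑_{i≤m} p_i` as `m → ∞`. -/
theorem count_events_asymptotic (Ω : Type) [MeasurableSpace Ω]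
    (μ : Measure Ω) [IsProbabilityMeasure μ]
    (B : ℕ → Set Ω) (hmeas : ∀ i, MeasurableSet (B i))
    (hind : ProbabilityTheory.iIndepSet B μ)
    (hdiv : ¬ Summable (fun i => (μ (B i)).toReal)) :
    ∀ᵐ ω ∂μ,
      Tendsto
        (fun m : ℕ =>
          (({i | i < m ∧ ω ∈ B i}.ncard : ℝ)) /
            ∑ i ∈ Finset.range m, (μ (B i)).toReal)
        atTop (nhds 1) := by
  have hint : ∀ i, μ[(B i).indicator 1] = (μ (B i)).toReal := fun i =>
    integral_indicator_one (hmeas i)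
  have h := ae_tendsto_sum_div_sum_integral (X := fun i => (B i).indicator (1 : Ω → ℝ))
    (fun i => (measurable_const.indicator (hmeas i)).aestronglyMeasurable)
    (fun i ω => Set.indicator_nonneg (fun _ _ => zero_le_one) ω)
    (fun i ω => Set.indicator_le_self' (fun _ _ => zero_le_one) ω)
    (fun i j hij => hind.iIndepFun_indicator.indepFun hij) (by simpa only [hint] using hdiv)
  filter_upwards [h] with ω hω
  simpa only [ncard_setOf_lt_and_mem_eq_sum_indicator, hint] using hω
end
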